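/- arXiv:1109.5142 — 5 statements merged into one kernel-verified Lean document; each statement's English description precedes it below -/
import Mathlib

section
/- Let p ≥ 2, α ≥ 0 and n be real numbers, and let R > 0. Let u : (0,R) → ℝ be twice differentiable, and define ω on (0, R^{1+α/p}) by ω(s) = u(s^{p/(p+α)}) (equivalently ω(r^{1+α/p}) = u(r)). Then for every r ∈ (0,R), setting s = r^{1+α/p} and N = p(n+α)/(p+α), one has the pointwise identity |u'(r)|^{p-2}·((p-1)·u''(r) + ((n-1)/r)·u'(r)) = (1+α/p)^p · r^α · |ω'(s)|^{p-2}·((p-1)·ω''(s) + ((N-1)/s)·ω'(s)). -/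
/-!
Write `ω = u ∘ φ` with `φ s = s ^ β`, `β = p / (p + α)`. For any change of variable, the chain
rule gives `Δ_{p,N} ω (s) = φ'(s) ^ p · Δ_{p,n} u (φ s)` as soon as
`(p - 1) φ'' + (N - 1) φ' / s = φ' ^ 2 (n - 1) / φ`; for the power map this condition reads
`(p - 1)(β - 1) + N - 1 = β (n - 1)`, i.e. `N = β (n + α)`. At `s = r ^ (1 + α / p)` the factor
`φ'(s) ^ p = (β r / s) ^ p` equals `(1 + α / p) ^ (-p) r ^ (-α)`.
-/

open Real

open Filter Topology

/-- `Δ_{p,m} u (r)` written through `u₁ = u'(r)` and `u₂ = u''(r)`. -/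
noncomputable def radialPLaplacian (p m r u₁ u₂ : ℝ) : ℝ :=
  |u₁| ^ (p - 2) * ((p - 1) * u₂ + ((m - 1) / r) * u₁)

/-- Chain rule for `ω = u ∘ φ`: here `r = φ s`, `φ₁ = φ' s`, `φ₂ = φ'' s`. -/
theorem radialPLaplacian_comp {p m M r s u₁ u₂ φ₁ φ₂ : ℝ} (hφ₁ : 0 < φ₁)
    (hφ : (p - 1) * φ₂ + (M - 1) / s * φ₁ = φ₁ ^ 2 * ((m - 1) / r)) :
    radialPLaplacian p M s (u₁ * φ₁) (u₂ * φ₁ ^ 2 + u₁ * φ₂) =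
      φ₁ ^ p * radialPLaplacian p m r u₁ u₂ := by
  have hpow : φ₁ ^ p = φ₁ ^ (p - 2) * φ₁ ^ 2 := by
    rw [← rpow_natCast, ← rpow_add hφ₁]; norm_num
  unfold radialPLaplacian
  rw [abs_mul, abs_of_pos hφ₁, mul_rpow (abs_nonneg _) hφ₁.le, hpow]
  linear_combination |u₁| ^ (p - 2) * φ₁ ^ (p - 2) * u₁ * hφ

theorem hasDerivAt_comp_rpow {u u' : ℝ → ℝ} {β s : ℝ} (hs : 0 < s)
    (hu : HasDerivAt u (u' (s ^ β)) (s ^ β)) :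
    HasDerivAt (fun x => u (x ^ β)) (u' (s ^ β) * (β * s ^ (β - 1))) s :=
  hu.comp s (hasDerivAt_rpow_const (Or.inl hs.ne'))

theorem deriv_comp_rpow_eventuallyEq {u u' : ℝ → ℝ} {β s : ℝ} (hs : 0 < s)
    (hu : ∀ᶠ y in 𝓝 (s ^ β), HasDerivAt u (u' y) y) :
    deriv (fun x => u (x ^ β)) =ᶠ[𝓝 s] fun x => u' (x ^ β) * (β * x ^ (β - 1)) := by
  have hu_near : ∀ᶠ x in 𝓝 s, HasDerivAt u (u' (x ^ β)) (x ^ β) :=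
    (continuousAt_rpow_const s β (Or.inl hs.ne')).eventually hu
  filter_upwards [hu_near, lt_mem_nhds hs] with x hux hx
  exact (hasDerivAt_comp_rpow hx hux).deriv

theorem hasDerivAt_deriv_comp_rpow {u u' u'' : ℝ → ℝ} {β s : ℝ} (hs : 0 < s)
    (hu : ∀ᶠ y in 𝓝 (s ^ β), HasDerivAt u (u' y) y)
    (hu' : HasDerivAt u' (u'' (s ^ β)) (s ^ β)) :
    HasDerivAt (deriv fun x => u (x ^ β))
      (u'' (s ^ β) * (β * s ^ (β - 1)) ^ 2 + u' (s ^ β) * (β * (β - 1) * s ^ (β - 2))) s := by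
  have hφ' : HasDerivAt (fun x => β * x ^ (β - 1)) (β * ((β - 1) * s ^ (β - 1 - 1))) s :=
    (hasDerivAt_rpow_const (Or.inl hs.ne')).const_mul β
  refine (((hasDerivAt_comp_rpow hs hu').mul hφ').congr_of_eventuallyEq
    (deriv_comp_rpow_eventuallyEq hs hu)).congr_deriv ?_
  rw [sub_sub, one_add_one_eq_two]
  ring

theorem rpow_one_add_div_rpow_div {p α r : ℝ} (hp : p ≠ 0) (hpα : p + α ≠ 0) (hr : 0 ≤ r) :
    (r ^ (1 + α / p)) ^ (p / (p + α)) = r := by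
  rw [← rpow_mul hr, show (1 + α / p) * (p / (p + α)) = 1 by field_simp, rpow_one]

theorem radialPLaplacian_comp_condition_rpow {p α n r s β : ℝ} (hpα : p + α ≠ 0)
    (hβ : β = p / (p + α)) (hr : 0 < r) (hs : 0 < s) (hsr : s ^ β = r) :
    (p - 1) * (β * (β - 1) * s ^ (β - 2)) + (p * (n + α) / (p + α) - 1) / s * (β * s ^ (β - 1)) =
      (β * s ^ (β - 1)) ^ 2 * ((n - 1) / r) := by
  rw [rpow_sub hs, rpow_sub_one hs.ne', rpow_two, hsr, hβ]
  field_simp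
  ring

theorem one_add_div_rpow_mul_rpow_mul_deriv_rpow_eq_one {p α r s β : ℝ} (hp : 0 < p)
    (hpα : 0 < p + α) (hβ : β = p / (p + α)) (hr : 0 < r) (hs : s = r ^ (1 + α / p)) :
    (1 + α / p) ^ p * r ^ α * (β * s ^ (β - 1)) ^ p = 1 := by
  subst hs
  have hβ₀ : 0 < β := hβ ▸ div_pos hp hpα
  have hγ₀ : 0 < 1 + α / p := by rw [one_add_div hp.ne']; exact div_pos hpα hp
  have hγβ : (1 + α / p) * β = 1 := by rw [hβ]; field_simp
  have hexp : (1 + α / p) * (β - 1) * p = -α := by rw [hβ]; field_simp; ring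
  rw [← rpow_mul hr.le, mul_rpow hβ₀.le (rpow_nonneg hr.le _), ← rpow_mul hr.le, hexp,
    rpow_neg hr.le]
  calc (1 + α / p) ^ p * r ^ α * (β ^ p * (r ^ α)⁻¹)
      = ((1 + α / p) * β) ^ p * (r ^ α * (r ^ α)⁻¹) := by
        rw [mul_rpow hγ₀.le hβ₀.le]; ring
    _ = 1 := by rw [hγβ, one_rpow, mul_inv_cancel₀ (rpow_pos_of_pos hr α).ne', one_mul]

theorem radial_change_of_variable_general
    (p α n R : ℝ) (hp : 2 ≤ p) (hα : 0 ≤ α)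
    (u u' u'' : ℝ → ℝ)
    (hu : ∀ r ∈ Set.Ioo (0 : ℝ) R, HasDerivAt u (u' r) r)
    (hu' : ∀ r ∈ Set.Ioo (0 : ℝ) R, HasDerivAt u' (u'' r) r)
    (ω : ℝ → ℝ) (hω : ∀ s : ℝ, ω s = u (s ^ (p / (p + α)))) :
    ∀ r ∈ Set.Ioo (0 : ℝ) R,
      |u' r| ^ (p - 2) * ((p - 1) * u'' r + ((n - 1) / r) * u' r) =
        (1 + α / p) ^ p * r ^ α *
          (|deriv ω (r ^ (1 + α / p))| ^ (p - 2) *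
            ((p - 1) * deriv (deriv ω) (r ^ (1 + α / p)) +
              ((p * (n + α) / (p + α) - 1) / r ^ (1 + α / p)) *
                deriv ω (r ^ (1 + α / p)))) := by
  intro r hr
  have hp₀ : 0 < p := by linarith
  have hpα : 0 < p + α := by linarith
  obtain ⟨β, hβ⟩ : ∃ β, β = p / (p + α) := ⟨_, rfl⟩
  obtain ⟨s, hs_def⟩ : ∃ s, s = r ^ (1 + α / p) := ⟨_, rfl⟩
  have hs : 0 < s := hs_def ▸ rpow_pos_of_pos hr.1 _
  have hsr : s ^ β = r := hs_def ▸ hβ ▸ rpow_one_add_div_rpow_div hp₀.ne' hpα.ne' hr.1.le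
  have hu_near : ∀ᶠ y in 𝓝 (s ^ β), HasDerivAt u (u' y) y := by
    rw [hsr]; filter_upwards [isOpen_Ioo.mem_nhds hr] using hu
  have hω_eq : ω = fun x => u (x ^ β) := funext (hβ ▸ hω)
  have hω' := (hasDerivAt_comp_rpow hs hu_near.self_of_nhds).deriv
  have hω'' := (hasDerivAt_deriv_comp_rpow hs hu_near (hsr ▸ hu' r hr)).deriv
  rw [← hω_eq, hsr] at hω' hω''
  rw [← hs_def]
  change radialPLaplacian p n r (u' r) (u'' r) = (1 + α / p) ^ p * r ^ α *
    radialPLaplacian p (p * (n + α) / (p + α)) s (deriv ω s) (deriv (deriv ω) s)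
  have hφ₁ : 0 < β * s ^ (β - 1) := mul_pos (hβ ▸ div_pos hp₀ hpα) (rpow_pos_of_pos hs _)
  rw [hω', hω'',
    radialPLaplacian_comp hφ₁ (radialPLaplacian_comp_condition_rpow hpα.ne' hβ hr.1 hs hsr),
    ← mul_assoc, one_add_div_rpow_mul_rpow_mul_deriv_rpow_eq_one hp₀ hpα hβ hr.1 hs_def, one_mul]

/-- The change of variable `s = r^(1+α/p)` transforms the radial weighted
`p`-Laplacian in dimension `n` into the unweighted radial `p`-Laplacian in the fractional
dimension `N = p(n+α)/(p+α)`: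
`|u'(r)|^(p-2) ((p-1) u''(r) + ((n-1)/r) u'(r)) =
  (1+α/p)^p r^α |ω'(s)|^(p-2) ((p-1) ω''(s) + ((N-1)/s) ω'(s))`
where `ω(s) = u(s^(p/(p+α)))`. -/
theorem radial_change_of_variable
    (p α n R : ℝ) (hp : 2 ≤ p) (hα : 0 ≤ α) (hR : 0 < R)
    (u u' u'' : ℝ → ℝ)
    (hu : ∀ r ∈ Set.Ioo (0 : ℝ) R, HasDerivAt u (u' r) r)
    (hu' : ∀ r ∈ Set.Ioo (0 : ℝ) R, HasDerivAt u' (u'' r) r)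
    (ω : ℝ → ℝ) (hω : ∀ s : ℝ, ω s = u (s ^ (p / (p + α)))) :
    ∀ r ∈ Set.Ioo (0 : ℝ) R,
      |u' r| ^ (p - 2) * ((p - 1) * u'' r + ((n - 1) / r) * u' r) =
        (1 + α / p) ^ p * r ^ α *
          (|deriv ω (r ^ (1 + α / p))| ^ (p - 2) *
            ((p - 1) * deriv (deriv ω) (r ^ (1 + α / p)) +
              ((p * (n + α) / (p + α) - 1) / r ^ (1 + α / p)) *
                deriv ω (r ^ (1 + α / p)))) :=
  radial_change_of_variable_general p α n R hp hα u u' u'' hu hu' ω hω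
end

section
/- Let p ≥ 2, α ≥ 0 and let n > 1 - α + α/p; set N := p(n+α)/(p+α) (so N > 1). Let ω : (0,∞) → ℝ be differentiable with continuous derivative ω' that never vanishes on (0,∞), and suppose 0 < ∫₀¹ t^{N-3}|ω'(t)|^p dt < ∞. Assume the radial stability inequality: (N-1)·∫₀^∞ t^{N-3}|ω'(t)|² · η(t)² · |ω'(t)|^{p-2} dt ≤ (p-1)·∫₀^∞ t^{N-1}|ω'(t)|^p · η'(t)² dt holds for every locally Lipschitz function η : [0,∞) → ℝ with compact support, where η' denotes its almost-everywhere derivative (the left side equals (N-1)∫₀^∞ t^{N-3}|ω'(t)|^p η(t)² dt). Then, with C := (p-1)/((N-1)·∫₀¹ t^{N-3}|ω'(t)|^p dt), for all real s, S with 1 ≤ s ≤ S one has ∫_s^S t^{-(N-1)} |ω'(t)|^{-p} dt ≤ C · s^{-2·√((N-1)/(p-1))}. -/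
/-!
Write `g = |ω'| ^ p`, `f t = t ^ (-(N - 1)) / g t`, `J = ∫ₛˢ f` and `γ = √((N - 1) / (p - 1))`,
and test the stability inequality with `η = 1` on `[0, 1]`, `η = t ^ (-γ)` on `[1, s]` and
`η = s ^ (-γ) (∫ₜˢ f) / J` on `[s, S]`. On `[1, s]` the two sides contribute the same amount
because `(p - 1) γ ² = N - 1`. On `[s, S]` the left side is nonnegative and the right side is
`s ^ (-2γ) / J`, because `t ^ (N - 1) g f ² = f`. What is left is
`(N - 1) ∫₀¹ t ^ (N - 3) g ≤ (p - 1) s ^ (-2γ) / J`.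
-/

open Real MeasureTheory Set
open scoped NNReal

theorem LipschitzWith.mul_of_abs_le {α : Type*} [PseudoMetricSpace α] {f g : α → ℝ}
    {Kf Kg A B : ℝ≥0} (hf : LipschitzWith Kf f) (hg : LipschitzWith Kg g)
    (hfA : ∀ x, |f x| ≤ A) (hgB : ∀ x, |g x| ≤ B) :
    LipschitzWith (A * Kg + B * Kf) fun x => f x * g x := by
  refine LipschitzWith.of_dist_le_mul fun x y => ?_
  have hfxy := hf.dist_le_mul x y
  have hgxy := hg.dist_le_mul x y
  rw [Real.dist_eq] at hfxy hgxy ⊢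
  calc |f x * g x - f y * g y| = |f x * (g x - g y) + g y * (f x - f y)| := by ring_nf
    _ ≤ |f x| * |g x - g y| + |g y| * |f x - f y| := by
      rw [← abs_mul, ← abs_mul]; exact abs_add_le _ _
    _ ≤ A * (Kg * dist x y) + B * (Kf * dist x y) := by
      gcongr
      exacts [hfA x, hgB y]
    _ = ↑(A * Kg + B * Kf) * dist x y := by push_cast; ring

theorem LipschitzOnWith.comp_max_min {F : ℝ → ℝ} {K : ℝ≥0} {a b : ℝ} (hab : a ≤ b)
    (hF : LipschitzOnWith K F (Icc a b)) : LipschitzWith K fun t => F (max a (min b t)) := by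
  have hclamp : LipschitzWith 1 fun t : ℝ => max a (min b t) := by
    simpa [Function.comp_def, projIcc] using
      (LipschitzWith.subtype_val _).comp (LipschitzWith.projIcc hab)
  have := lipschitzOnWith_univ.mp
    (hF.comp hclamp.lipschitzOnWith fun t _ => ⟨le_max_left _ _, max_le hab (min_le_left _ _)⟩)
  rwa [mul_one] at this

theorem ContinuousOn.exists_lipschitzOnWith_integral_left {f : ℝ → ℝ} {a b : ℝ}
    (hf : ContinuousOn f (Icc a b)) :
    ∃ C, LipschitzOnWith C (fun u => ∫ x in u..b, f x) (Icc a b) := by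
  obtain ⟨C, hC⟩ := isCompact_Icc.exists_bound_of_continuousOn hf
  refine ⟨C.toNNReal, LipschitzOnWith.of_dist_le_mul fun x hx y hy => ?_⟩
  have hint : ∀ u ∈ Icc a b, IntervalIntegrable f volume u b := fun u hu =>
    (hf.mono (uIcc_subset_Icc hu (right_mem_Icc.2 (hu.1.trans hu.2)))).intervalIntegrable
  rw [Real.dist_eq, intervalIntegral.integral_interval_sub_interval_comm' (hint x hx) (hint y hy)
    ((hf.mono (uIcc_subset_Icc hx hy)).intervalIntegrable), intervalIntegral.integral_same,
    zero_sub, abs_neg, Real.dist_eq]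
  refine intervalIntegral.norm_integral_le_of_norm_le_const fun u hu => (hC u ?_).trans ?_
  · exact uIcc_subset_Icc hy hx (uIoc_subset_uIcc hu)
  · exact le_coe_toNNReal C

theorem integral_Ioi_eq_add_add_of_eq_zero {F : ℝ → ℝ} {a b c d : ℝ} (had : a ≤ d)
    (h₁ : IntervalIntegrable F volume a b) (h₂ : IntervalIntegrable F volume b c)
    (h₃ : IntervalIntegrable F volume c d) (hF : ∀ t, d < t → F t = 0) :
    ∫ t in Ioi a, F t = (∫ t in a..b, F t) + (∫ t in b..c, F t) + ∫ t in c..d, F t := by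
  rw [intervalIntegral.integral_add_adjacent_intervals h₁ h₂,
    intervalIntegral.integral_add_adjacent_intervals (h₁.trans h₂) h₃,
    intervalIntegral.integral_of_le had]
  exact setIntegral_eq_of_subset_of_forall_sdiff_eq_zero measurableSet_Ioi Ioc_subset_Ioi_self
    fun t ht => hF t (not_le.1 fun htd => ht.2 ⟨ht.1, htd⟩)

theorem rpow_mul_mul_sq_rpow_neg_mul_inv {t c : ℝ} (ht : 0 < t) (hc : c ≠ 0) (a : ℝ) :
    t ^ a * c * (t ^ (-a) * c⁻¹) ^ 2 = t ^ (-a) * c⁻¹ := by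
  rw [rpow_neg ht.le]
  field_simp [(rpow_pos_of_pos ht a).ne']

theorem rpow_add_two_mul_mul_sq_rpow_sub_one {t : ℝ} (ht : 0 < t) (a b c : ℝ) :
    t ^ (a + 2) * c * (t ^ (b - 1)) ^ 2 = t ^ a * c * (t ^ b) ^ 2 := by
  rw [rpow_sub_one ht.ne', show a + 2 = a + 1 + 1 by ring, rpow_add_one ht.ne',
    rpow_add_one ht.ne']
  field_simp

/-- `1` on `[0, 1]`, `t ^ (-γ)` on `[1, s]`, `s ^ (-γ) (∫ₜˢ f) / ∫ₛˢ f` on `[s, S]` and `0` beyond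
`S` and below `-1`; written as a product of clamped factors so that it is visibly Lipschitz. -/
noncomputable def stabilityTestFunction (f : ℝ → ℝ) (γ s S t : ℝ) : ℝ :=
  max 0 (min 1 (1 + t)) * max 1 (min s t) ^ (-γ) *
    ∫ u in max s (min S t)..S, f u / ∫ v in s..S, f v

section stabilityTestFunction

variable {f : ℝ → ℝ} {γ s S t : ℝ}

theorem integral_div_integral_mem_Icc (hf : ContinuousOn f (Icc s S))
    (hf0 : ∀ t ∈ Icc s S, 0 ≤ f t) {c : ℝ} (hc : c ∈ Icc s S) :
    (∫ u in c..S, f u / ∫ v in s..S, f v) ∈ Icc 0 1 := by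
  rw [intervalIntegral.integral_div]
  have hsS : s ≤ S := hc.1.trans hc.2
  rcases (intervalIntegral.integral_nonneg hsS hf0).eq_or_lt with hJ | hJ
  · rw [← hJ, div_zero]
    exact ⟨le_rfl, zero_le_one⟩
  refine ⟨div_nonneg (intervalIntegral.integral_nonneg hc.2 fun u hu =>
    hf0 u ⟨hc.1.trans hu.1, hu.2⟩) hJ.le, (div_le_one hJ).2 ?_⟩
  exact intervalIntegral.integral_mono_interval hc.1 hc.2 le_rfl
    ((ae_restrict_mem measurableSet_Ioc).mono fun u hu => hf0 u (Ioc_subset_Icc_self hu))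
    ((hf.mono (uIcc_of_le hsS).subset).intervalIntegrable)

theorem locallyLipschitz_stabilityTestFunction (hγ : 0 ≤ γ) (hs : 1 ≤ s) (hsS : s ≤ S)
    (hf : ContinuousOn f (Icc s S)) (hf0 : ∀ t ∈ Icc s S, 0 ≤ f t) :
    LocallyLipschitz (stabilityTestFunction f γ s S) := by
  have hramp : LipschitzWith (0 + 1) fun t : ℝ => max 0 (min 1 (1 + t)) :=
    (((LipschitzWith.const (1 : ℝ)).add LipschitzWith.id).const_min 1).const_max 0
  obtain ⟨K, hK⟩ := (contDiffOn_id.rpow_const_of_ne (p := -γ) fun u hu =>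
    (zero_lt_one.trans_le hu.1).ne').exists_lipschitzOnWith one_ne_zero (convex_Icc 1 s)
    isCompact_Icc
  obtain ⟨C, hC⟩ := (hf.div_const (∫ v in s..S, f v)).exists_lipschitzOnWith_integral_left
  have hramp_le (t : ℝ) : |max 0 (min 1 (1 + t))| ≤ (1 : ℝ≥0) := by
    rw [abs_of_nonneg (le_max_left _ _)]
    exact max_le zero_le_one (min_le_left _ _)
  have hpow_le (t : ℝ) : |max 1 (min s t) ^ (-γ)| ≤ (1 : ℝ≥0) := by
    rw [abs_of_nonneg (rpow_nonneg (zero_le_one.trans (le_max_left _ _)) _), NNReal.coe_one]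
    exact rpow_le_one_of_one_le_of_nonpos (le_max_left _ _) (neg_nonpos.2 hγ)
  have hcut_le (t : ℝ) : |∫ u in max s (min S t)..S, f u / ∫ v in s..S, f v| ≤ (1 : ℝ≥0) := by
    obtain ⟨h0, h1⟩ := integral_div_integral_mem_Icc hf hf0
      ⟨le_max_left s _, max_le hsS (min_le_left _ _)⟩
    rwa [abs_of_nonneg h0, NNReal.coe_one]
  have hramp_pow_le (t : ℝ) :
      |max 0 (min 1 (1 + t)) * max 1 (min s t) ^ (-γ)| ≤ (1 : ℝ≥0) := by
    rw [abs_mul, NNReal.coe_one]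
    exact mul_le_one₀ (by simpa using hramp_le t) (abs_nonneg _) (by simpa using hpow_le t)
  exact ((hramp.mul_of_abs_le (hK.comp_max_min hs) hramp_le hpow_le).mul_of_abs_le
    (hC.comp_max_min hsS) hramp_pow_le hcut_le).locallyLipschitz

theorem stabilityTestFunction_eq_one (hs : 1 ≤ s) (hsS : s ≤ S) (hJ : ∫ v in s..S, f v ≠ 0)
    (ht : t ∈ Icc 0 1) : stabilityTestFunction f γ s S t = 1 := by
  rw [stabilityTestFunction, min_eq_left (by linarith [ht.1]), max_eq_right zero_le_one,
    min_eq_right (ht.2.trans hs), max_eq_left ht.2, one_rpow,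
    min_eq_right (ht.2.trans (hs.trans hsS)), max_eq_left (ht.2.trans hs),
    intervalIntegral.integral_div, div_self hJ, mul_one, mul_one]

theorem stabilityTestFunction_eq_rpow (hsS : s ≤ S) (hJ : ∫ v in s..S, f v ≠ 0)
    (ht : t ∈ Icc 1 s) : stabilityTestFunction f γ s S t = t ^ (-γ) := by
  rw [stabilityTestFunction, min_eq_left (by linarith [ht.1]), max_eq_right zero_le_one,
    min_eq_right ht.2, max_eq_right ht.1, min_eq_right (ht.2.trans hsS), max_eq_left ht.2,
    intervalIntegral.integral_div, div_self hJ, mul_one, one_mul]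

theorem stabilityTestFunction_eq_integral (hs : 1 ≤ s) (ht : t ∈ Icc s S) :
    stabilityTestFunction f γ s S t = s ^ (-γ) * ∫ u in t..S, f u / ∫ v in s..S, f v := by
  rw [stabilityTestFunction, min_eq_left (by linarith [ht.1]), max_eq_right zero_le_one,
    min_eq_left ht.1, max_eq_right hs, min_eq_right ht.2, max_eq_right ht.1, one_mul]

theorem stabilityTestFunction_eq_zero_of_le (hsS : s ≤ S) (ht : S ≤ t) :
    stabilityTestFunction f γ s S t = 0 := by
  rw [stabilityTestFunction, min_eq_left ht, max_eq_right hsS, intervalIntegral.integral_same,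
    mul_zero]

theorem stabilityTestFunction_eq_zero_of_le_neg_one (ht : t ≤ -1) :
    stabilityTestFunction f γ s S t = 0 := by
  rw [stabilityTestFunction, min_eq_right (by linarith), max_eq_left (by linarith), zero_mul,
    zero_mul]

theorem hasCompactSupport_stabilityTestFunction (hsS : s ≤ S) :
    HasCompactSupport (stabilityTestFunction f γ s S) := by
  refine HasCompactSupport.intro (isCompact_Icc (a := -1) (b := S)) fun t ht => ?_
  rcases not_and_or.1 ht with ht | ht
  · exact stabilityTestFunction_eq_zero_of_le_neg_one (not_le.1 ht).le
  · exact stabilityTestFunction_eq_zero_of_le hsS (not_le.1 ht).le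

theorem deriv_stabilityTestFunction_of_mem_Ioo_zero_one (hs : 1 ≤ s) (hsS : s ≤ S)
    (hJ : ∫ v in s..S, f v ≠ 0) (ht : t ∈ Ioo 0 1) :
    deriv (stabilityTestFunction f γ s S) t = 0 := by
  have hEq : EqOn (stabilityTestFunction f γ s S) (fun _ => 1) (Ioo 0 1) := fun u hu =>
    stabilityTestFunction_eq_one hs hsS hJ (Ioo_subset_Icc_self hu)
  rw [hEq.deriv isOpen_Ioo ht, deriv_const]

theorem deriv_stabilityTestFunction_of_mem_Ioo_one (hsS : s ≤ S) (hJ : ∫ v in s..S, f v ≠ 0)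
    (ht : t ∈ Ioo 1 s) : deriv (stabilityTestFunction f γ s S) t = -γ * t ^ (-γ - 1) := by
  have hEq : EqOn (stabilityTestFunction f γ s S) (fun u => u ^ (-γ)) (Ioo 1 s) := fun u hu =>
    stabilityTestFunction_eq_rpow hsS hJ (Ioo_subset_Icc_self hu)
  rw [hEq.deriv isOpen_Ioo ht]
  exact (hasDerivAt_rpow_const (Or.inl (zero_lt_one.trans ht.1).ne')).deriv

theorem deriv_stabilityTestFunction_of_mem_Ioo (hs : 1 ≤ s) (hf : ContinuousOn f (Icc s S))
    (ht : t ∈ Ioo s S) :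
    deriv (stabilityTestFunction f γ s S) t = -(s ^ (-γ) * (f t / ∫ v in s..S, f v)) := by
  have hEq : EqOn (stabilityTestFunction f γ s S)
      (fun u => s ^ (-γ) * ∫ x in u..S, f x / ∫ v in s..S, f v) (Ioo s S) := fun u hu =>
    stabilityTestFunction_eq_integral hs (Ioo_subset_Icc_self hu)
  have hf' : ContinuousOn (fun x => f x / ∫ v in s..S, f v) (Ioo s S) :=
    (hf.mono Ioo_subset_Icc_self).div_const _
  rw [hEq.deriv isOpen_Ioo ht, ← mul_neg]
  refine ((intervalIntegral.integral_hasDerivAt_left ?_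
    (hf'.stronglyMeasurableAtFilter isOpen_Ioo t ht)
    (hf'.continuousAt (isOpen_Ioo.mem_nhds ht))).const_mul _).deriv
  exact ((hf.div_const _).mono
    (uIcc_of_le ht.2.le ▸ Icc_subset_Icc_left ht.1.le)).intervalIntegrable

theorem deriv_stabilityTestFunction_of_lt (hsS : s ≤ S) (ht : S < t) :
    deriv (stabilityTestFunction f γ s S) t = 0 := by
  have hEq : EqOn (stabilityTestFunction f γ s S) (fun _ => 0) (Ioi S) := fun u hu =>
    stabilityTestFunction_eq_zero_of_le hsS (le_of_lt hu)
  rw [hEq.deriv isOpen_Ioi ht, deriv_const]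

theorem le_integral_mul_sq_stabilityTestFunction {w : ℝ → ℝ} (hγ : 0 ≤ γ) (hs : 1 ≤ s)
    (hsS : s ≤ S) (hf : ContinuousOn f (Icc s S)) (hf0 : ∀ t ∈ Icc s S, 0 ≤ f t)
    (hJ : ∫ v in s..S, f v ≠ 0) (hw : ContinuousOn w (Ioi 0)) (hw0 : ∀ t ∈ Ioi 0, 0 ≤ w t)
    (hw1 : IntegrableOn w (Ioo 0 1)) :
    (∫ t in Ioo 0 1, w t) + ∫ t in 1..s, w t * (t ^ (-γ)) ^ 2 ≤
      ∫ t in Ioi 0, w t * stabilityTestFunction f γ s S t ^ 2 := by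
  set η := stabilityTestFunction f γ s S
  have h01le : (0 : ℝ) ≤ 1 := zero_le_one
  have hF : ContinuousOn (fun t => w t * η t ^ 2) (Ioi 0) :=
    hw.mul ((locallyLipschitz_stabilityTestFunction hγ hs hsS hf hf0).continuous.continuousOn.pow 2)
  have hF_int {a b : ℝ} (ha : 0 < a) (hab : a ≤ b) :
      IntervalIntegrable (fun t => w t * η t ^ 2) volume a b :=
    (hF.mono fun t ht => ha.trans_le (uIcc_of_le hab ▸ ht).1).intervalIntegrable
  have h01 : EqOn w (fun t => w t * η t ^ 2) (Ioo 0 1) := fun t ht => by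
    dsimp only
    rw [show η t = 1 from stabilityTestFunction_eq_one hs hsS hJ (Ioo_subset_Icc_self ht)]
    ring
  have h1s : EqOn (fun t => w t * η t ^ 2) (fun t => w t * (t ^ (-γ)) ^ 2) (uIcc 1 s) :=
    fun t ht => by
      dsimp only
      rw [show η t = t ^ (-γ) from stabilityTestFunction_eq_rpow hsS hJ (uIcc_of_le hs ▸ ht)]
  have hw01 : IntervalIntegrable w volume 0 1 :=
    (intervalIntegrable_iff_integrableOn_Ioo_of_le zero_le_one).2 hw1
  rw [integral_Ioi_eq_add_add_of_eq_zero (b := 1) (c := s) (by linarith)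
    (hw01.congr_uIoo (uIoo_of_le h01le ▸ h01)) (hF_int one_pos hs)
    (hF_int (by linarith) hsS)
    fun t ht => by simp [η, stabilityTestFunction_eq_zero_of_le hsS ht.le],
    ← intervalIntegral.integral_congr_Ioo_of_le h01le h01, intervalIntegral.integral_of_le h01le,
    integral_Ioc_eq_integral_Ioo, intervalIntegral.integral_congr h1s, le_add_iff_nonneg_right]
  exact intervalIntegral.integral_nonneg hsS fun t ht =>
    mul_nonneg (hw0 t (show 0 < t by linarith [ht.1])) (sq_nonneg _)

theorem integral_mul_deriv_sq_stabilityTestFunction {v : ℝ → ℝ} (hs : 1 ≤ s) (hsS : s ≤ S)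
    (hf : ContinuousOn f (Icc s S)) (hJ : ∫ u in s..S, f u ≠ 0) (hv : ContinuousOn v (Ioi 0)) :
    ∫ t in Ioi 0, v t * deriv (stabilityTestFunction f γ s S) t ^ 2 =
      γ ^ 2 * (∫ t in 1..s, v t * (t ^ (-γ - 1)) ^ 2) +
        (s ^ (-γ) / ∫ u in s..S, f u) ^ 2 * ∫ t in s..S, v t * f t ^ 2 := by
  set η := stabilityTestFunction f γ s S
  set J := ∫ u in s..S, f u
  have h01le : (0 : ℝ) ≤ 1 := zero_le_one
  have h01 : EqOn (fun t => v t * deriv η t ^ 2) 0 (Ioo 0 1) := fun t ht => by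
    simp [η, deriv_stabilityTestFunction_of_mem_Ioo_zero_one hs hsS hJ ht]
  have h1s : EqOn (fun t => v t * deriv η t ^ 2) (fun t => γ ^ 2 * (v t * (t ^ (-γ - 1)) ^ 2))
      (Ioo 1 s) := fun t ht => by
    simp only [η, deriv_stabilityTestFunction_of_mem_Ioo_one hsS hJ ht]
    ring
  have hsS' : EqOn (fun t => v t * deriv η t ^ 2)
      (fun t => (s ^ (-γ) / J) ^ 2 * (v t * f t ^ 2)) (Ioo s S) := fun t ht => by
    simp only [η, deriv_stabilityTestFunction_of_mem_Ioo hs hf ht]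
    ring
  have hpos {a b : ℝ} (ha : 0 < a) (hab : a ≤ b) : uIcc a b ⊆ Ioi 0 := fun t ht =>
    ha.trans_le (uIcc_of_le hab ▸ ht).1
  have hint₁ : IntervalIntegrable (fun t => γ ^ 2 * (v t * (t ^ (-γ - 1)) ^ 2)) volume 1 s :=
    (continuousOn_const.mul ((hv.mono (hpos one_pos hs)).mul
      ((continuousOn_id.rpow_const fun t ht => Or.inl (hpos one_pos hs ht).ne').pow 2))
      ).intervalIntegrable
  have hint₂ : IntervalIntegrable (fun t => (s ^ (-γ) / J) ^ 2 * (v t * f t ^ 2)) volume s S :=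
    (continuousOn_const.mul ((hv.mono (hpos (by linarith) hsS)).mul
      ((hf.mono (uIcc_of_le hsS).subset).pow 2))).intervalIntegrable
  rw [integral_Ioi_eq_add_add_of_eq_zero (b := 1) (c := s) (by linarith)
    ((intervalIntegrable_const (c := (0 : ℝ))).congr_uIoo (uIoo_of_le h01le ▸ h01.symm))
    (hint₁.congr_uIoo (uIoo_of_le hs ▸ h1s.symm)) (hint₂.congr_uIoo (uIoo_of_le hsS ▸ hsS'.symm))
    fun t ht => by simp [η, deriv_stabilityTestFunction_of_lt hsS ht],
    intervalIntegral.integral_congr_Ioo_of_le h01le h01,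
    intervalIntegral.integral_congr_Ioo_of_le hs h1s,
    intervalIntegral.integral_congr_Ioo_of_le hsS hsS', intervalIntegral.integral_const_mul,
    intervalIntegral.integral_const_mul]
  simp

end stabilityTestFunction

theorem mul_integral_rpow_mul_inv_le_of_stability {p N : ℝ} (hp : 1 < p) (hN : 1 < N)
    {g : ℝ → ℝ} (hg : ContinuousOn g (Ioi 0)) (hg0 : ∀ t ∈ Ioi (0 : ℝ), 0 < g t)
    (hInt : IntegrableOn (fun t => t ^ (N - 3) * g t) (Ioo 0 1))
    (hstab : ∀ η : ℝ → ℝ, LocallyLipschitz η → HasCompactSupport η →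
      (N - 1) * ∫ t in Ioi (0 : ℝ), t ^ (N - 3) * g t * η t ^ 2 ≤
        (p - 1) * ∫ t in Ioi (0 : ℝ), t ^ (N - 1) * g t * deriv η t ^ 2)
    {s S : ℝ} (hs : 1 ≤ s) (hsS : s < S) :
    (N - 1) * (∫ t in Ioo (0 : ℝ) 1, t ^ (N - 3) * g t) *
        ∫ t in s..S, t ^ (-(N - 1)) * (g t)⁻¹ ≤
      (p - 1) * s ^ (-2 * √((N - 1) / (p - 1))) := by
  set γ := √((N - 1) / (p - 1))
  set f := fun t : ℝ => t ^ (-(N - 1)) * (g t)⁻¹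
  set J := ∫ t in s..S, f t
  have hrpow (a : ℝ) : ContinuousOn (fun t : ℝ => t ^ a) (Ioi 0) :=
    continuousOn_id.rpow_const fun t ht => Or.inl (ne_of_gt ht)
  have hIcc : Icc s S ⊆ Ioi 0 := fun t ht => (zero_lt_one.trans_le hs).trans_le ht.1
  have hf0 (t : ℝ) (ht : t ∈ Icc s S) : 0 < f t :=
    mul_pos (rpow_pos_of_pos (hIcc ht) _) (inv_pos.2 (hg0 t (hIcc ht)))
  have hf : ContinuousOn f (Icc s S) :=
    ((hrpow _).mul (hg.inv₀ fun t ht => (hg0 t ht).ne')).mono hIcc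
  have hJ : 0 < J := intervalIntegral.intervalIntegral_pos_of_pos_on
    (hf.mono (uIcc_of_le hsS.le).subset).intervalIntegrable
    (fun t ht => hf0 t (Ioo_subset_Icc_self ht)) hsS
  have hγ : (p - 1) * γ ^ 2 = N - 1 := by
    rw [sq_sqrt (div_nonneg (by linarith) (by linarith))]
    field_simp [(sub_pos.2 hp).ne']
  have hlow := le_integral_mul_sq_stabilityTestFunction (w := fun t => t ^ (N - 3) * g t)
    (sqrt_nonneg _ : 0 ≤ γ) hs hsS.le hf (fun t ht => (hf0 t ht).le) hJ.ne'
    ((hrpow _).mul hg) (fun t ht => mul_nonneg (rpow_nonneg (le_of_lt ht) _) (hg0 t ht).le) hInt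
  have hup := integral_mul_deriv_sq_stabilityTestFunction (γ := γ)
    (v := fun t => t ^ (N - 1) * g t) hs hsS.le hf hJ.ne' ((hrpow _).mul hg)
  have key := hstab _ (locallyLipschitz_stabilityTestFunction (sqrt_nonneg _ : 0 ≤ γ) hs hsS.le
    hf (fun t ht => (hf0 t ht).le)) (hasCompactSupport_stabilityTestFunction hsS.le)
  have hvw : EqOn (fun t => t ^ (N - 1) * g t * (t ^ (-γ - 1)) ^ 2)
      (fun t => t ^ (N - 3) * g t * (t ^ (-γ)) ^ 2) (uIcc 1 s) := fun t ht => by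
    dsimp only
    rw [show N - 1 = N - 3 + 2 by ring]
    exact rpow_add_two_mul_mul_sq_rpow_sub_one (one_pos.trans_le (uIcc_of_le hs ▸ ht).1) _ _ _
  have hvf : EqOn (fun t => t ^ (N - 1) * g t * f t ^ 2) f (uIcc s S) := fun t ht =>
    rpow_mul_mul_sq_rpow_neg_mul_inv (hIcc (uIcc_of_le hsS.le ▸ ht))
      (hg0 t (hIcc (uIcc_of_le hsS.le ▸ ht))).ne' _
  rw [hup, intervalIntegral.integral_congr hvw, intervalIntegral.integral_congr hvf] at key
  set A := ∫ t in Ioo (0 : ℝ) 1, t ^ (N - 3) * g t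
  set B := ∫ t in (1 : ℝ)..s, t ^ (N - 3) * g t * (t ^ (-γ)) ^ 2
  have hAB := (mul_le_mul_of_nonneg_left hlow (by linarith : 0 ≤ N - 1)).trans key
  rw [show s ^ (-2 * γ) = (s ^ (-γ)) ^ 2 by
    rw [← rpow_natCast, ← rpow_mul (zero_le_one.trans hs)]; ring_nf]
  calc (N - 1) * A * J = ((N - 1) * (A + B) - (p - 1) * γ ^ 2 * B) * J := by rw [hγ]; ring
    _ ≤ ((p - 1) * (γ ^ 2 * B + (s ^ (-γ) / J) ^ 2 * J) - (p - 1) * γ ^ 2 * B) * J := by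
      gcongr ?_ * J
      exact sub_le_sub_right hAB _
    _ = (p - 1) * (s ^ (-γ)) ^ 2 := by field_simp; ring

theorem integral_rpow_mul_inv_le_of_stability {p N : ℝ} (hp : 1 < p) (hN : 1 < N)
    {g : ℝ → ℝ} (hg : ContinuousOn g (Ioi 0)) (hg0 : ∀ t ∈ Ioi (0 : ℝ), 0 < g t)
    (hInt : IntegrableOn (fun t => t ^ (N - 3) * g t) (Ioo 0 1))
    (hIntpos : 0 < ∫ t in Ioo (0 : ℝ) 1, t ^ (N - 3) * g t)
    (hstab : ∀ η : ℝ → ℝ, LocallyLipschitz η → HasCompactSupport η →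
      (N - 1) * ∫ t in Ioi (0 : ℝ), t ^ (N - 3) * g t * η t ^ 2 ≤
        (p - 1) * ∫ t in Ioi (0 : ℝ), t ^ (N - 1) * g t * deriv η t ^ 2)
    {s S : ℝ} (hs : 1 ≤ s) (hsS : s ≤ S) :
    ∫ t in Ioc s S, t ^ (-(N - 1)) * (g t)⁻¹ ≤
      (p - 1) / ((N - 1) * ∫ t in Ioo (0 : ℝ) 1, t ^ (N - 3) * g t) *
        s ^ (-2 * √((N - 1) / (p - 1))) := by
  rcases hsS.eq_or_lt with rfl | hsS
  · rw [Ioc_self, setIntegral_empty]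
    exact mul_nonneg (div_nonneg (by linarith) (mul_nonneg (by linarith) hIntpos.le))
      (rpow_nonneg (zero_le_one.trans hs) _)
  rw [← intervalIntegral.integral_of_le hsS.le, div_mul_eq_mul_div,
    le_div_iff₀ (mul_pos (by linarith) hIntpos), mul_comm]
  exact mul_integral_rpow_mul_inv_le_of_stability hp hN hg hg0 hInt hstab hs hsS

theorem stability_integral_estimate_general
    (p α n : ℝ) (hp : 2 ≤ p) (hα : 0 ≤ α) (hn : 1 - α + α / p < n)
    (N : ℝ) (hN : N = p * (n + α) / (p + α))
    (ω' : ℝ → ℝ)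
    (hω'cont : ContinuousOn ω' (Set.Ioi 0))
    (hω'ne : ∀ t ∈ Set.Ioi (0 : ℝ), ω' t ≠ 0)
    (hInt : IntegrableOn (fun t => t ^ (N - 3) * |ω' t| ^ p) (Set.Ioo 0 1))
    (hIntpos : 0 < ∫ t in Set.Ioo (0 : ℝ) 1, t ^ (N - 3) * |ω' t| ^ p)
    (hstab : ∀ η : ℝ → ℝ, LocallyLipschitz η → HasCompactSupport η →
      (N - 1) * ∫ t in Set.Ioi (0 : ℝ), t ^ (N - 3) * |ω' t| ^ p * η t ^ 2 ≤
        (p - 1) * ∫ t in Set.Ioi (0 : ℝ), t ^ (N - 1) * |ω' t| ^ p * deriv η t ^ 2) :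
    ∀ s S : ℝ, 1 ≤ s → s ≤ S →
      (∫ t in Set.Ioc s S, t ^ (-(N - 1)) * |ω' t| ^ (-p)) ≤
        (p - 1) / ((N - 1) * ∫ t in Set.Ioo (0 : ℝ) 1, t ^ (N - 3) * |ω' t| ^ p) *
          s ^ (-2 * Real.sqrt ((N - 1) / (p - 1))) := by
  have hN1 : 1 < N := by
    have hpn := mul_lt_mul_of_pos_left hn (by linarith : 0 < p)
    rw [mul_add, mul_sub, mul_div_cancel₀ _ (by linarith : p ≠ 0)] at hpn
    rw [hN, lt_div_iff₀ (by linarith)]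
    linarith
  intro s S hs hsS
  simp only [rpow_neg (abs_nonneg _)]
  exact integral_rpow_mul_inv_le_of_stability (by linarith) hN1
    ((hω'cont.abs).rpow_const fun t _ => Or.inr (by linarith))
    (fun t ht => rpow_pos_of_pos (abs_pos.2 (hω'ne t ht)) p) hInt hIntpos hstab hs hsS

/-- Integral estimate from radial stability: if `ω` is the transformed
profile (with never-vanishing continuous derivative) satisfying the radial stability
inequality in the fractional dimension `N = p(n+α)/(p+α)`, then for `1 ≤ s ≤ S`,
`∫_s^S t^{-(N-1)} |ω'(t)|^{-p} dt ≤ C s^{-2√((N-1)/(p-1))}` where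
`C = (p-1)/((N-1) ∫₀¹ t^{N-3}|ω'(t)|^p dt)`. -/
theorem stability_integral_estimate
    (p α n : ℝ) (hp : 2 ≤ p) (hα : 0 ≤ α) (hn : 1 - α + α / p < n)
    (N : ℝ) (hN : N = p * (n + α) / (p + α))
    (ω ω' : ℝ → ℝ)
    (hω : ∀ t ∈ Set.Ioi (0 : ℝ), HasDerivAt ω (ω' t) t)
    (hω'cont : ContinuousOn ω' (Set.Ioi 0))
    (hω'ne : ∀ t ∈ Set.Ioi (0 : ℝ), ω' t ≠ 0)
    (hInt : IntegrableOn (fun t => t ^ (N - 3) * |ω' t| ^ p) (Set.Ioo 0 1))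
    (hIntpos : 0 < ∫ t in Set.Ioo (0 : ℝ) 1, t ^ (N - 3) * |ω' t| ^ p)
    (hstab : ∀ η : ℝ → ℝ, LocallyLipschitz η → HasCompactSupport η →
      (N - 1) * ∫ t in Set.Ioi (0 : ℝ), t ^ (N - 3) * |ω' t| ^ p * η t ^ 2 ≤
        (p - 1) * ∫ t in Set.Ioi (0 : ℝ), t ^ (N - 1) * |ω' t| ^ p * deriv η t ^ 2) :
    ∀ s S : ℝ, 1 ≤ s → s ≤ S →
      (∫ t in Set.Ioc s S, t ^ (-(N - 1)) * |ω' t| ^ (-p)) ≤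
        (p - 1) / ((N - 1) * ∫ t in Set.Ioo (0 : ℝ) 1, t ^ (N - 3) * |ω' t| ^ p) *
          s ^ (-2 * Real.sqrt ((N - 1) / (p - 1))) :=
  stability_integral_estimate_general p α n hp hα hn N hN ω' hω'cont hω'ne hInt hIntpos hstab
end

section
/- Let p ≥ 2, α ≥ 0 and n > 1 - α + α/p; set N := p(n+α)/(p+α). Let ω : (0,∞) → ℝ be differentiable with continuous, never-vanishing derivative ω' on (0,∞), fix γ > 1 and C > 0, and assume that for every s ≥ 1, ∫_s^{γs} t^{-(N-1)}|ω'(t)|^{-p} dt ≤ C · s^{-2√((N-1)/(p-1))}. Define Ĉ_γ := ln γ if N = p+2 and Ĉ_γ := ((p+1)/(p+2-N))·(γ^{(p+2-N)/(p+1)} - 1) if N ≠ p+2. Then for every s ≥ 1, |ω(γs) - ω(s)| ≥ Ĉ_γ^{(p+1)/p} · C^{-1/p} · s^{(1/p)(p+2-N+2√((N-1)/(p-1)))}. Consequently, if u(r) := ω(r^{1+α/p}), then for every r ≥ 1, |u(γ^{p/(p+α)} r) - u(r)| ≥ Ĉ_γ^{(p+1)/p} · C^{-1/p} · r^{N_p(α)},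 where N_p(α) := (1/p)(1+α/p)(p+2 - N + 2√((N-1)/(p-1))). -/
/-!
Since `ω'` never vanishes, it has constant sign (Darboux), so
`|ω(γs) - ω(s)| = ∫_s^{γs} |ω'|`. Writing
`t^{-(N-1)/(p+1)} = (t^{-(N-1)/(p+1)} |ω'|^{-p/(p+1)}) · |ω'|^{p/(p+1)}` and applying Hölder's
inequality with exponents `p + 1` and `(p + 1)/p` bounds
`∫_s^{γs} t^{-(N-1)/(p+1)} dt = Ĉ_γ s^{(p+2-N)/(p+1)}` by the estimated integral to the power
`1/(p+1)` times `(∫_s^{γs} |ω'|)^{p/(p+1)}`; solving for `∫_s^{γs} |ω'|` gives the bound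
for `ω`, and the substitution `s = r^{1+α/p}` gives the bound for `u`.
-/

open Real MeasureTheory Set

theorem integral_le_integral_rpow_mul_abs_rpow_neg_mul_integral_abs {α : Type*}
    [MeasurableSpace α] {μ : Measure α} {v g : α → ℝ} {q : ℝ} (hq : 0 < q)
    (hv : 0 ≤ᵐ[μ] v) (hvm : AEStronglyMeasurable v μ) (hg : ∀ᵐ x ∂μ, g x ≠ 0)
    (hA : Integrable (fun x => v x ^ (q + 1) * |g x| ^ (-q)) μ) (hB : Integrable g μ) :
    ∫ x, v x ∂μ ≤ (∫ x, v x ^ (q + 1) * |g x| ^ (-q) ∂μ) ^ (1 / (q + 1)) *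
      (∫ x, |g x| ∂μ) ^ (q / (q + 1)) := by
  have hq1 : 0 < q + 1 := by linarith
  set F : α → ℝ := fun x => v x * |g x| ^ (-q / (q + 1))
  set G : α → ℝ := fun x => |g x| ^ (q / (q + 1))
  have hconj : (q + 1).HolderConjugate ((q + 1) / q) := by
    rw [Real.holderConjugate_iff_eq_conjExponent (by linarith)]
    congr 1
    ring
  have hF0 : 0 ≤ᵐ[μ] F := by
    filter_upwards [hv] with x hx using mul_nonneg hx (by positivity)
  have hG0 : 0 ≤ᵐ[μ] G := Filter.Eventually.of_forall fun x => by positivity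
  have hgm : AEStronglyMeasurable (fun x => |g x|) μ := hB.1.norm
  have hFm : AEStronglyMeasurable F μ :=
    hvm.mul (hgm.aemeasurable.pow_const _).aestronglyMeasurable
  have hGm : AEStronglyMeasurable G μ := (hgm.aemeasurable.pow_const _).aestronglyMeasurable
  have hFG : (fun x => v x) =ᵐ[μ] fun x => F x * G x := by
    filter_upwards [hg] with x hx
    rw [mul_assoc, ← rpow_add (abs_pos.2 hx), show -q / (q + 1) + q / (q + 1) = 0 by ring,
      rpow_zero, mul_one]
  have hFpow : (fun x => F x ^ (q + 1)) =ᵐ[μ] fun x => v x ^ (q + 1) * |g x| ^ (-q) := by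
    filter_upwards [hv] with x hx
    rw [mul_rpow hx (by positivity),
      ← rpow_mul (abs_nonneg _), div_mul_cancel₀ _ hq1.ne']
  have hGpow : ∀ x, G x ^ ((q + 1) / q) = |g x| := fun x => by
    rw [← rpow_mul (abs_nonneg _),
      div_mul_div_cancel₀ hq1.ne', div_self hq.ne', rpow_one]
  have hFL : MemLp F (ENNReal.ofReal (q + 1)) μ := by
    refine (integrable_norm_rpow_iff hFm (by simpa using hq1) ENNReal.ofReal_ne_top).1 ?_
    rw [ENNReal.toReal_ofReal hq1.le]
    refine hA.congr ?_
    filter_upwards [hFpow, hF0] with x hx hx0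
    rw [Real.norm_of_nonneg hx0, hx]
  have hGL : MemLp G (ENNReal.ofReal ((q + 1) / q)) μ := by
    refine (integrable_norm_rpow_iff hGm (by simp; positivity) ENNReal.ofReal_ne_top).1 ?_
    rw [ENNReal.toReal_ofReal (by positivity)]
    refine hB.abs.congr (Filter.Eventually.of_forall fun x => ?_)
    dsimp only
    rw [Real.norm_of_nonneg (by positivity), hGpow]
  calc ∫ x, v x ∂μ = ∫ x, F x * G x ∂μ := integral_congr_ae hFG
    _ ≤ (∫ x, F x ^ (q + 1) ∂μ) ^ (1 / (q + 1)) *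
          (∫ x, G x ^ ((q + 1) / q) ∂μ) ^ (1 / ((q + 1) / q)) :=
      integral_mul_le_Lp_mul_Lq_of_nonneg hconj hF0 hG0 hFL hGL
    _ = _ := by
      rw [integral_congr_ae hFpow, funext hGpow, one_div_div]

theorem rpow_mul_rpow_neg_le_of_le_rpow_mul_rpow {I A B D q : ℝ} (hq : 0 < q) (hI : 0 ≤ I)
    (hA : 0 ≤ A) (hB : 0 ≤ B) (hD : 0 < D) (hAD : A ≤ D)
    (h : I ≤ A ^ (1 / (q + 1)) * B ^ (q / (q + 1))) :
    I ^ ((q + 1) / q) * D ^ (-1 / q) ≤ B := by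
  have hID : I ≤ D ^ (1 / (q + 1)) * B ^ (q / (q + 1)) :=
    h.trans (by gcongr)
  calc I ^ ((q + 1) / q) * D ^ (-1 / q)
      ≤ (D ^ (1 / (q + 1)) * B ^ (q / (q + 1))) ^ ((q + 1) / q) * D ^ (-1 / q) := by gcongr
    _ = B := by
      rw [mul_rpow (by positivity) (by positivity), ← rpow_mul hD.le, ← rpow_mul hB,
        mul_right_comm, ← rpow_add hD]
      field_simp
      simp

theorem integral_abs_eq_abs_sub_of_hasDerivAt_of_ne_zero {f f' : ℝ → ℝ} {a b : ℝ}
    (hab : a ≤ b) (hf : ∀ t ∈ Icc a b, HasDerivAt f (f' t) t)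
    (hint : IntervalIntegrable f' volume a b)
    (hne : ∀ t ∈ Icc a b, f' t ≠ 0) :
    ∫ t in a..b, |f' t| = |f b - f a| := by
  have hFTC : ∫ t in a..b, f' t = f b - f a :=
    intervalIntegral.integral_eq_sub_of_hasDerivAt
      (fun t ht => hf t (by rwa [uIcc_of_le hab] at ht)) hint
  have hnn : 0 ≤ ∫ t in a..b, |f' t| :=
    intervalIntegral.integral_nonneg hab fun _ _ => abs_nonneg _
  rcases hasDerivWithinAt_forall_lt_or_forall_gt_of_forall_ne (convex_Icc a b)
    (fun t ht => (hf t ht).hasDerivWithinAt) hne with hneg | hpos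
  · have h : ∫ t in a..b, |f' t| = -(f b - f a) := by
      rw [← hFTC, ← intervalIntegral.integral_neg]
      exact intervalIntegral.integral_congr fun t ht =>
        abs_of_neg (hneg t (by rwa [uIcc_of_le hab] at ht))
    rw [h, abs_of_nonpos (by linarith)]
  · have h : ∫ t in a..b, |f' t| = f b - f a := by
      rw [← hFTC]
      exact intervalIntegral.integral_congr fun t ht =>
        abs_of_pos (hpos t (by rwa [uIcc_of_le hab] at ht))
    rw [h, abs_of_nonneg (h ▸ hnn)]

theorem rpow_integral_mul_rpow_neg_le_abs_sub {f f' v : ℝ → ℝ} {a b q D : ℝ} (hab : a ≤ b)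
    (hq : 0 < q) (hD : 0 < D) (hf : ∀ t ∈ Icc a b, HasDerivAt f (f' t) t)
    (hf'c : ContinuousOn f' (Icc a b)) (hf'ne : ∀ t ∈ Icc a b, f' t ≠ 0)
    (hvc : ContinuousOn v (Icc a b)) (hv0 : ∀ t ∈ Icc a b, 0 ≤ v t)
    (hvD : ∫ t in Ioc a b, v t ^ (q + 1) * |f' t| ^ (-q) ≤ D) :
    (∫ t in Ioc a b, v t) ^ ((q + 1) / q) * D ^ (-1 / q) ≤ |f b - f a| := by
  have hae : ∀ᵐ t ∂(volume.restrict (Ioc a b)), t ∈ Icc a b := by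
    filter_upwards [ae_restrict_mem measurableSet_Ioc] with t ht using Ioc_subset_Icc_self ht
  have hA : IntegrableOn (fun t => v t ^ (q + 1) * |f' t| ^ (-q)) (Ioc a b) :=
    ((hvc.rpow_const fun t _ => Or.inr (by linarith)).mul
      (hf'c.abs.rpow_const fun t ht => Or.inl (abs_ne_zero.2 (hf'ne t ht)))).integrableOn_Icc
      |>.mono_set Ioc_subset_Icc_self
  have hHolder := integral_le_integral_rpow_mul_abs_rpow_neg_mul_integral_abs hq
    (hae.mono fun t ht => hv0 t ht)
    ((hvc.mono Ioc_subset_Icc_self).aestronglyMeasurable measurableSet_Ioc)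
    (hae.mono fun t ht => hf'ne t ht) hA (hf'c.integrableOn_Icc.mono_set Ioc_subset_Icc_self)
  have hB : ∫ t in Ioc a b, |f' t| = |f b - f a| := by
    rw [← intervalIntegral.integral_of_le hab]
    exact integral_abs_eq_abs_sub_of_hasDerivAt_of_ne_zero hab hf
      (hf'c.intervalIntegrable_of_Icc hab) hf'ne
  rw [hB] at hHolder
  exact rpow_mul_rpow_neg_le_of_le_rpow_mul_rpow hq
    (setIntegral_nonneg_of_ae_restrict (hae.mono fun t ht => hv0 t ht))
    (setIntegral_nonneg_of_ae_restrict (hae.mono fun t ht => by have := hv0 t ht; positivity))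
    (abs_nonneg _) hD hvD hHolder

theorem integral_rpow_dilation {s γ r : ℝ} (hs : 0 < s) (hγ : 0 < γ) :
    ∫ t in s..γ * s, t ^ r = (∫ t in 1..γ, t ^ r) * s ^ (r + 1) := by
  have hscale :=
    intervalIntegral.integral_comp_mul_left (fun t => t ^ r) (a := 1) (b := γ) hs.ne'
  have hsplit : ∫ t in 1..γ, (s * t) ^ r = s ^ r * ∫ t in 1..γ, t ^ r := by
    rw [← intervalIntegral.integral_const_mul]
    refine intervalIntegral.integral_congr fun t ht => mul_rpow hs.le ?_
    have : 0 < min 1 γ := lt_min one_pos hγ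
    exact (this.trans_le ht.1).le
  rw [hsplit, mul_one, mul_comm s γ, smul_eq_mul] at hscale
  rw [rpow_add_one hs.ne', show (∫ t in 1..γ, t ^ r) * (s ^ r * s) =
    (s ^ r * ∫ t in 1..γ, t ^ r) * s by ring, hscale]
  field_simp

theorem integral_one_rpow_neg_sub_one_div {p N γ : ℝ} (hp : 0 < p + 1) (hγ : 0 < γ) :
    ∫ t in 1..γ, t ^ (-(N - 1) / (p + 1)) = if N = p + 2 then log γ
      else ((p + 1) / (p + 2 - N)) * (γ ^ ((p + 2 - N) / (p + 1)) - 1) := by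
  split_ifs with hN
  · have : -(N - 1) / (p + 1) = -1 := by rw [hN]; field_simp; ring
    rw [this]
    simp_rw [rpow_neg_one]
    rw [integral_inv_of_pos one_pos hγ, div_one]
  · have hr : -(N - 1) / (p + 1) + 1 = (p + 2 - N) / (p + 1) := by field_simp; ring
    have hne : -(N - 1) / (p + 1) ≠ -1 := fun h => hN (by field_simp at h; linarith)
    rw [integral_rpow (Or.inr ⟨hne, notMem_uIcc_of_lt one_pos hγ⟩), hr, one_rpow]
    have : p + 2 - N ≠ 0 := fun h => hN (by linarith)
    field_simp

theorem le_abs_sub_of_integral_rpow_mul_abs_deriv_rpow_neg_le {ω ω' : ℝ → ℝ}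
    {p N C γ s κ : ℝ} (hp : 0 < p) (hC : 0 < C) (hγ : 1 ≤ γ) (hs : 0 < s)
    (hω : ∀ t ∈ Ioi (0 : ℝ), HasDerivAt ω (ω' t) t) (hω'c : ContinuousOn ω' (Ioi 0))
    (hω'ne : ∀ t ∈ Ioi (0 : ℝ), ω' t ≠ 0)
    (hest : ∫ t in Ioc s (γ * s), t ^ (-(N - 1)) * |ω' t| ^ (-p) ≤ C * s ^ (-2 * κ)) :
    (∫ t in 1..γ, t ^ (-(N - 1) / (p + 1))) ^ ((p + 1) / p) * C ^ (-1 / p) *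
        s ^ ((1 / p) * (p + 2 - N + 2 * κ)) ≤ |ω (γ * s) - ω s| := by
  have hsγ : s ≤ γ * s := le_mul_of_one_le_left hs.le hγ
  have hIcc : Icc s (γ * s) ⊆ Ioi 0 := fun t ht => hs.trans_le ht.1
  have hweight : ∫ t in Ioc s (γ * s), (t ^ (-(N - 1) / (p + 1))) ^ (p + 1) * |ω' t| ^ (-p) =
      ∫ t in Ioc s (γ * s), t ^ (-(N - 1)) * |ω' t| ^ (-p) := by
    refine setIntegral_congr_fun measurableSet_Ioc fun t ht => ?_
    rw [← rpow_mul (hs.trans ht.1).le, div_mul_cancel₀ _ (by linarith)]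
  have hbound := rpow_integral_mul_rpow_neg_le_abs_sub (v := fun t => t ^ (-(N - 1) / (p + 1)))
    hsγ hp (by positivity)
    (fun t ht => hω t (hIcc ht)) (hω'c.mono hIcc) (fun t ht => hω'ne t (hIcc ht))
    (continuousOn_id.rpow_const fun t ht => Or.inl (hIcc ht).ne')
    (fun t ht => rpow_nonneg (hIcc ht).le _) (hweight ▸ hest)
  rw [← intervalIntegral.integral_of_le hsγ, integral_rpow_dilation hs (by linarith)] at hbound
  have hJ : 0 ≤ ∫ t in 1..γ, t ^ (-(N - 1) / (p + 1)) :=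
    intervalIntegral.integral_nonneg hγ fun t ht => rpow_nonneg (by linarith [ht.1]) _
  refine le_of_eq_of_le ?_ hbound
  have hexp : s ^ ((1 / p) * (p + 2 - N + 2 * κ)) =
      s ^ ((-(N - 1) / (p + 1) + 1) * ((p + 1) / p)) * s ^ (-2 * κ * (-1 / p)) := by
    rw [← rpow_add hs]
    congr 1
    field_simp
    ring
  rw [mul_rpow hJ (by positivity), mul_rpow hC.le (by positivity), ← rpow_mul hs.le,
    ← rpow_mul hs.le, hexp]
  ring

theorem pointwise_lower_bound_general
    (p α : ℝ) (hp : 2 ≤ p) (hα : 0 ≤ α)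
    (N : ℝ)
    (ω ω' : ℝ → ℝ)
    (hω : ∀ t ∈ Set.Ioi (0 : ℝ), HasDerivAt ω (ω' t) t)
    (hω'cont : ContinuousOn ω' (Set.Ioi 0))
    (hω'ne : ∀ t ∈ Set.Ioi (0 : ℝ), ω' t ≠ 0)
    (γ C : ℝ) (hγ : 1 < γ) (hC : 0 < C)
    (hest : ∀ s : ℝ, 1 ≤ s →
      (∫ t in Set.Ioc s (γ * s), t ^ (-(N - 1)) * |ω' t| ^ (-p)) ≤
        C * s ^ (-2 * Real.sqrt ((N - 1) / (p - 1))))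
    (Chat : ℝ)
    (hChat : Chat = if N = p + 2 then Real.log γ
      else ((p + 1) / (p + 2 - N)) * (γ ^ ((p + 2 - N) / (p + 1)) - 1))
    (u : ℝ → ℝ) (hu : ∀ r : ℝ, u r = ω (r ^ (1 + α / p))) :
    (∀ s : ℝ, 1 ≤ s →
      Chat ^ ((p + 1) / p) * C ^ (-(1 : ℝ) / p) *
          s ^ ((1 / p) * (p + 2 - N + 2 * Real.sqrt ((N - 1) / (p - 1)))) ≤
        |ω (γ * s) - ω s|) ∧
    (∀ r : ℝ, 1 ≤ r →
      Chat ^ ((p + 1) / p) * C ^ (-(1 : ℝ) / p) *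
          r ^ ((1 / p) * (1 + α / p) *
            (p + 2 - N + 2 * Real.sqrt ((N - 1) / (p - 1)))) ≤
        |u (γ ^ (p / (p + α)) * r) - u r|) := by
  have hp0 : 0 < p := by linarith
  rw [← integral_one_rpow_neg_sub_one_div (by linarith) (by linarith)] at hChat
  subst hChat
  have hω_bound : ∀ s : ℝ, 1 ≤ s → _ := fun s hs =>
    le_abs_sub_of_integral_rpow_mul_abs_deriv_rpow_neg_le hp0 hC hγ.le (by linarith) hω hω'cont
      hω'ne (hest s hs)
  refine ⟨hω_bound, fun r hr => ?_⟩
  have hr0 : 0 < r := by linarith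
  have hβ : 0 ≤ 1 + α / p := by positivity
  have hscale : (γ ^ (p / (p + α)) * r) ^ (1 + α / p) = γ * r ^ (1 + α / p) := by
    rw [mul_rpow (by positivity) hr0.le, ← rpow_mul (by linarith),
      show p / (p + α) * (1 + α / p) = 1 by field_simp, rpow_one]
  have hbound := hω_bound (r ^ (1 + α / p)) (one_le_rpow hr hβ)
  rw [← rpow_mul hr0.le] at hbound
  rw [hu, hu, hscale]
  convert hbound using 3
  ring

/-- Pointwise lower bound from the integral estimate: if
`∫_s^{γs} t^{-(N-1)}|ω'(t)|^{-p} dt ≤ C s^{-2√((N-1)/(p-1))}` for all `s ≥ 1`, then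
`|ω(γs) - ω(s)| ≥ Ĉ_γ^{(p+1)/p} C^{-1/p} s^{(1/p)(p+2-N+2√((N-1)/(p-1)))}`, and
correspondingly for `u(r) = ω(r^{1+α/p})`,
`|u(γ^{p/(p+α)} r) - u(r)| ≥ Ĉ_γ^{(p+1)/p} C^{-1/p} r^{N_p(α)}`. -/
theorem pointwise_lower_bound
    (p α n : ℝ) (hp : 2 ≤ p) (hα : 0 ≤ α) (hn : 1 - α + α / p < n)
    (N : ℝ) (hN : N = p * (n + α) / (p + α))
    (ω ω' : ℝ → ℝ)
    (hω : ∀ t ∈ Set.Ioi (0 : ℝ), HasDerivAt ω (ω' t) t)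
    (hω'cont : ContinuousOn ω' (Set.Ioi 0))
    (hω'ne : ∀ t ∈ Set.Ioi (0 : ℝ), ω' t ≠ 0)
    (γ C : ℝ) (hγ : 1 < γ) (hC : 0 < C)
    (hest : ∀ s : ℝ, 1 ≤ s →
      (∫ t in Set.Ioc s (γ * s), t ^ (-(N - 1)) * |ω' t| ^ (-p)) ≤
        C * s ^ (-2 * Real.sqrt ((N - 1) / (p - 1))))
    (Chat : ℝ)
    (hChat : Chat = if N = p + 2 then Real.log γ
      else ((p + 1) / (p + 2 - N)) * (γ ^ ((p + 2 - N) / (p + 1)) - 1))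
    (u : ℝ → ℝ) (hu : ∀ r : ℝ, u r = ω (r ^ (1 + α / p))) :
    (∀ s : ℝ, 1 ≤ s →
      Chat ^ ((p + 1) / p) * C ^ (-(1 : ℝ) / p) *
          s ^ ((1 / p) * (p + 2 - N + 2 * Real.sqrt ((N - 1) / (p - 1)))) ≤
        |ω (γ * s) - ω s|) ∧
    (∀ r : ℝ, 1 ≤ r →
      Chat ^ ((p + 1) / p) * C ^ (-(1 : ℝ) / p) *
          r ^ ((1 / p) * (1 + α / p) *
            (p + 2 - N + 2 * Real.sqrt ((N - 1) / (p - 1)))) ≤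
        |u (γ ^ (p / (p + α)) * r) - u r|) :=
  pointwise_lower_bound_general p α hp hα N ω ω' hω hω'cont hω'ne γ C hγ hC hest Chat hChat u hu
end

section
/- Let p ≥ 2, α ≥ 0, and let n be an integer with n > p. Let q := (n(p-1)+p(α+1))/(n-p) (equivalently, n = p(q+α+1)/(q-p+1), the critical dimension). For each ε > 0 define u_ε : (0,∞) → ℝ by u_ε(r) := (ε(n+α)((n-p)/(p-1))^{p-1})^{(n-p)/(p(p+α))} · (ε + r^{(p+α)/(p-1)})^{(p-n)/(p+α)}. Then for every r > 0, u_ε satisfies the radial equation -|u_ε'(r)|^{p-2}·((p-1)·u_ε''(r) + ((n-1)/r)·u_ε'(r)) = r^α · u_ε(r)^q. -/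
open Real

/-- In the critical case `q = (n(p-1)+p(α+1))/(n-p)`, the explicit radial
function `u_ε(r) = (ε(n+α)((n-p)/(p-1))^{p-1})^{(n-p)/(p(p+α))} (ε + r^{(p+α)/(p-1)})^{(p-n)/(p+α)}`
satisfies `-|u'|^{p-2}((p-1)u'' + ((n-1)/r)u') = r^α u^q` for every `r > 0`. -/
theorem critical_radial_solution
    (p α : ℝ) (hp : 2 ≤ p) (hα : 0 ≤ α)
    (n : ℕ) (hn : p < (n : ℝ))
    (q : ℝ) (hq : q = ((n : ℝ) * (p - 1) + p * (α + 1)) / ((n : ℝ) - p))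
    (ε : ℝ) (hε : 0 < ε)
    (uε : ℝ → ℝ)
    (huε : ∀ r : ℝ, uε r =
      (ε * ((n : ℝ) + α) * (((n : ℝ) - p) / (p - 1)) ^ (p - 1)) ^
          (((n : ℝ) - p) / (p * (p + α))) *
        (ε + r ^ ((p + α) / (p - 1))) ^ ((p - (n : ℝ)) / (p + α))) :
    ∀ r : ℝ, 0 < r →
      -(|deriv uε r| ^ (p - 2) *
          ((p - 1) * deriv (deriv uε) r + (((n : ℝ) - 1) / r) * deriv uε r)) =
        r ^ α * uε r ^ q := by
  have hp0 : (0:ℝ) < p - 1 := by linarith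
  have hpa : (0:ℝ) < p + α := by linarith
  have hnp : (0:ℝ) < (n : ℝ) - p := by linarith
  have hna : (0:ℝ) < (n : ℝ) + α := by linarith
  set m : ℝ := (p + α) / (p - 1) with hm
  set β : ℝ := (p - (n : ℝ)) / (p + α) with hβ
  set A : ℝ := ε * ((n : ℝ) + α) * (((n : ℝ) - p) / (p - 1)) ^ (p - 1) with hA
  have hApos : 0 < A := mul_pos (mul_pos hε hna) (Real.rpow_pos_of_pos (div_pos hnp hp0) _)
  set C : ℝ := A ^ (((n : ℝ) - p) / (p * (p + α))) with hC
  have hCpos : 0 < C := Real.rpow_pos_of_pos hApos _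
  have hm0 : 0 < m := div_pos hpa hp0
  have hβneg : β < 0 := div_neg_of_neg_of_pos (by linarith) hpa
  have hPpos : 0 < C * (m * -β) := mul_pos hCpos (mul_pos hm0 (neg_pos.2 hβneg))
  have hfun : uε = fun r : ℝ => C * (ε + r ^ m) ^ β := funext huε
  have hGpos : ∀ x : ℝ, 0 < x → 0 < ε + x ^ m := fun x hx =>
    add_pos hε (Real.rpow_pos_of_pos hx _)
  have hG : ∀ x : ℝ, 0 < x → HasDerivAt (fun y : ℝ => ε + y ^ m) (m * x ^ (m - 1)) x :=
    fun x hx => (Real.hasDerivAt_rpow_const (Or.inl hx.ne')).const_add ε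
  have hu' : ∀ x : ℝ, 0 < x →
      HasDerivAt uε (C * ((m * x ^ (m - 1)) * β * (ε + x ^ m) ^ (β - 1))) x := by
    intro x hx
    rw [hfun]
    exact ((hG x hx).rpow_const (Or.inl (hGpos x hx).ne')).const_mul C
  have hdu : ∀ x : ℝ, 0 < x →
      deriv uε x = C * ((m * x ^ (m - 1)) * β * (ε + x ^ m) ^ (β - 1)) :=
    fun x hx => (hu' x hx).deriv
  intro r hr
  have hGp0 : 0 < ε + r ^ m := hGpos r hr
  have hdd : deriv (deriv uε) r =
      (C * m * β) * (((m - 1) * r ^ (m - 1 - 1)) * (ε + r ^ m) ^ (β - 1)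
        + r ^ (m - 1) * ((m * r ^ (m - 1)) * (β - 1) * (ε + r ^ m) ^ (β - 1 - 1))) := by
    have hev : deriv uε =ᶠ[nhds r]
        (fun x => (C * m * β) * (x ^ (m - 1) * (ε + x ^ m) ^ (β - 1))) := by
      filter_upwards [eventually_gt_nhds hr] with x hx
      rw [hdu x hx]; ring
    rw [hev.deriv_eq]
    exact (((Real.hasDerivAt_rpow_const (Or.inl hr.ne')).mul
      ((hG r hr).rpow_const (Or.inl hGp0.ne'))).const_mul _).deriv
  have key1 : (p - 1) * deriv (deriv uε) r + (((n : ℝ) - 1) / r) * deriv uε r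
      = (C * m * β) * (((n : ℝ) + α) * ε) * (r ^ (m - 2) * (ε + r ^ m) ^ (β - 2)) := by
    rw [hdd, hdu r hr]
    have h11 : r ^ (m - 1 - 1) = r ^ (m - 2) := by rw [show m - 1 - 1 = m - 2 from by ring]
    have h22 : (ε + r ^ m) ^ (β - 1 - 1) = (ε + r ^ m) ^ (β - 2) := by
      rw [show β - 1 - 1 = β - 2 from by ring]
    have h5 : (ε + r ^ m) ^ (β - 1) = (ε + r ^ m) ^ (β - 2) * (ε + r ^ m) := by
      rw [← Real.rpow_add_one hGp0.ne']; congr 1; ring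
    have h3 : r ^ (m - 1) = r ^ (m - 2) * r := by
      rw [← Real.rpow_add_one hr.ne']; congr 1; ring
    have h6 : r ^ m = r ^ (m - 2) * r * r := by
      rw [← Real.rpow_add_one hr.ne', ← Real.rpow_add_one hr.ne']; congr 1; ring
    rw [h11, h22, h5, h3, h6, hm, hβ]
    field_simp
    ring
  have habs : |deriv uε r| = C * (m * -β) * (r ^ (m - 1) * (ε + r ^ m) ^ (β - 1)) := by
    rw [hdu r hr, show C * ((m * r ^ (m - 1)) * β * (ε + r ^ m) ^ (β - 1))
        = -(C * (m * -β) * (r ^ (m - 1) * (ε + r ^ m) ^ (β - 1))) from by ring,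
      abs_neg, abs_of_pos (mul_pos hPpos (mul_pos (Real.rpow_pos_of_pos hr _)
        (Real.rpow_pos_of_pos hGp0 _)))]
  have habs2 : |deriv uε r| ^ (p - 2) = (C * (m * -β)) ^ (p - 2) *
      (r ^ ((m - 1) * (p - 2)) * (ε + r ^ m) ^ ((β - 1) * (p - 2))) := by
    rw [habs, Real.mul_rpow hPpos.le
        (mul_pos (Real.rpow_pos_of_pos hr _) (Real.rpow_pos_of_pos hGp0 _)).le,
      Real.mul_rpow (Real.rpow_pos_of_pos hr _).le (Real.rpow_pos_of_pos hGp0 _).le,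
      ← Real.rpow_mul hr.le, ← Real.rpow_mul hGp0.le]
  have eR : (m - 1) * (p - 2) + (m - 2) = α := by
    rw [hm]; field_simp; ring
  have eG : (β - 1) * (p - 2) + (β - 2) = β * q := by
    rw [hβ, hq]; field_simp; ring
  have hmb : m * -β = ((n : ℝ) - p) / (p - 1) := by
    rw [hm, hβ]; field_simp; ring
  have hq1 : q - (p - 1) = p * (p + α) / ((n : ℝ) - p) := by
    rw [hq]; field_simp; ring
  have eC : (C * (m * -β)) ^ (p - 1) * (((n : ℝ) + α) * ε) = C ^ q := by
    rw [hmb, Real.mul_rpow hCpos.le (div_pos hnp hp0).le]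
    have h7 : C ^ q = C ^ (p - 1) * C ^ (q - (p - 1)) := by
      rw [← Real.rpow_add hCpos]; congr 1; ring
    have h8 : C ^ (q - (p - 1)) = A := by
      rw [hC, ← Real.rpow_mul hApos.le,
        show (((n : ℝ) - p) / (p * (p + α))) * (q - (p - 1)) = 1 from by
          rw [hq1]; field_simp, Real.rpow_one]
    rw [h7, h8, hA]; ring
  rw [key1, habs2, huε r,
    Real.mul_rpow hCpos.le (Real.rpow_pos_of_pos hGp0 β).le,
    ← Real.rpow_mul hGp0.le,
    ← eC, ← eR, ← eG,
    Real.rpow_add hr, Real.rpow_add hGp0,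
    show p - 1 = (p - 2) + 1 from by ring,
    Real.rpow_add_one hPpos.ne']
  ring
end

section
/- Let p ≥ 2, q > p-1, and fix t with 1 ≤ t < -1 + 2(q+√(q(q-p+1)))/(p-1). There exist a natural number m₀ ≥ 1 and, for each integer m ≥ m₀, a constant C > 0 depending only on p, q, t, m (in particular independent of Ω, f and u) with the following property: for every integer n ≥ 1, every open set Ω ⊆ ℝⁿ, every continuous f : Ω → ℝ with f ≥ 0, and every positive u ∈ C¹(Ω) which is a weak solution of -Δ_p u = f(x) u^q on Ω and is stable on Ω, one has, for every C¹ function φ : ℝⁿ → ℝ with compact support in Ω and 0 ≤ φ ≤ 1: ∫_Ω (|∇u|^p u^{t-1} + f u^{t+q}) φ^{2m} dx ≤ C ∫_Ω f^{-(t+1)/(q-1)} (|∇u|^{p-2} |∇φ|²)^{(t+q)/(q-1)} dx, where both sides are Lebesgue integrals with values in [0,∞] (the right-hand side may be +∞ where f vanishes). -/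
/-!
Write `a = (t + 1) / 2` and let `I, F, J, K` be the integrals over `Ω` of `Moser.gradDensity`,
`Moser.sourceDensity`, `Moser.crossDensity` and `Moser.cutoffDensity`, i.e. of
`|∇u|^p u^(t-1) φ^(2m)`, `f u^(t+q) φ^(2m)`, `u^t |∇u|^(p-2) ⟨∇u, ∇φ⟩ φ^(2m-1)` and
`u^(t+1) |∇u|^(p-2) |∇φ|² φ^(2m-2)`. Testing the equation with `u^t φ^(2m)` gives
`t I + 2m J = F`, and the stability inequality with `u^a φ^m` gives
`q F ≤ (p-1) (a² I + 2am J + m² K)`. The upper bound on `t` says exactly `(p-1) a² < q t`, so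
eliminating `F` and absorbing `J` through `|J| ≤ ε I + K / (4ε)` yields `I + F ≤ C K`.
Finally Young's inequality with exponents `(t+q)/(t+1)` and `(t+q)/(q-1)` bounds `K` by a small
multiple of `F` plus a multiple of the right-hand side; `m ≥ (t+q)/(q-1)` leaves enough powers
of `φ` for this, and the `F` term is absorbed into the left-hand side.
-/

open Real MeasureTheory Set InnerProductSpace
open scoped ENNReal Topology Gradient

lemma sub_one_mul_add_one_div_two_sq_lt_mul {p q t : ℝ} (hp : 1 < p) (hq : p - 1 < q)
    (ht : 1 ≤ t) (ht' : t < -1 + 2 * (q + √(q * (q - p + 1))) / (p - 1)) :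
    (p - 1) * ((t + 1) / 2) ^ 2 < q * t := by
  set s := √(q * (q - p + 1))
  have hs0 : 0 ≤ s := sqrt_nonneg _
  have hs : s ^ 2 = q * (q - p + 1) := sq_sqrt (by nlinarith)
  -- `t + 1` lies strictly between the two roots `2 (q ± s) / (p - 1)` of the quadratic
  have hupper : (t + 1) * (p - 1) < 2 * (q + s) := by
    rw [← lt_div_iff₀ (by linarith)]
    linarith
  have hlower : 2 * (q - s) < (t + 1) * (p - 1) := by
    have : q - (p - 1) < s := by nlinarith
    nlinarith
  nlinarith

lemma two_le_of_add_le_mul_sub_one {q t : ℝ} {m : ℕ} (hq : 1 < q) (ht : -1 < t)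
    (hm : t + q ≤ m * (q - 1)) : 2 ≤ m := by
  by_contra! h
  have : (m : ℝ) ≤ 1 := by exact_mod_cast Nat.lt_succ_iff.mp h
  nlinarith

lemma abs_le_mul_add_div_of_sq_le_mul {i j k ε : ℝ} (hi : 0 ≤ i) (hk : 0 ≤ k) (hε : 0 < ε)
    (h : j ^ 2 ≤ i * k) : |j| ≤ ε * i + k / (4 * ε) := by
  have hsq : i * k ≤ (ε * i + k / (4 * ε)) ^ 2 := by
    have : (ε * i + k / (4 * ε)) ^ 2 - i * k = (ε * i - k / (4 * ε)) ^ 2 := by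
      field_simp; ring
    nlinarith [sq_nonneg (ε * i - k / (4 * ε))]
  exact abs_le_of_sq_le_sq (h.trans hsq) (by positivity)

lemma rpow_sub_two_mul_sq {x p : ℝ} (hx : 0 ≤ x) (hp : p ≠ 0) : x ^ (p - 2) * x ^ 2 = x ^ p := by
  rw [← rpow_natCast, ← rpow_add' hx (by simpa using hp)]
  norm_num

lemma rpow_mul_rpow_le_mul_add {a b w₁ w₂ ε : ℝ} (ha : 0 ≤ a) (hb : 0 ≤ b) (hw₁ : 0 < w₁)
    (hw₂ : 0 < w₂) (hw : w₁ + w₂ = 1) (hε : 0 < ε) :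
    a ^ w₁ * b ^ w₂ ≤ ε * a + ε ^ (-w₁ / w₂) * b := by
  have hε' : 0 ≤ ε ^ (-w₁ / w₂) := by positivity
  have key := geom_mean_le_arith_mean2_weighted hw₁.le hw₂.le (by positivity : 0 ≤ ε * a)
    (mul_nonneg hε' hb) hw
  have hlhs : (ε * a) ^ w₁ * (ε ^ (-w₁ / w₂) * b) ^ w₂ = a ^ w₁ * b ^ w₂ := by
    rw [mul_rpow hε.le ha, mul_rpow hε' hb, ← rpow_mul hε.le, div_mul_cancel₀ _ hw₂.ne',
      rpow_neg hε.le]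
    field_simp
  rw [hlhs] at key
  nlinarith [mul_nonneg hε.le ha, mul_nonneg hε' hb]

lemma rpow_mul_mul_pow_le_young {q t ε f U G P : ℝ} {m : ℕ} (hq : 1 < q) (ht : -1 < t)
    (hm : t + q ≤ m * (q - 1)) (hε : 0 < ε) (hf : 0 < f) (hU : 0 ≤ U) (hG : 0 ≤ G)
    (hP₀ : 0 ≤ P) (hP₁ : P ≤ 1) :
    U ^ (t + 1) * G * P ^ (2 * m - 2) ≤
      ε * (f * U ^ (t + q) * P ^ (2 * m)) +
        ε ^ (-(t + 1) / (q - 1)) * (f ^ (-(t + 1) / (q - 1)) * G ^ ((t + q) / (q - 1))) := by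
  have htq : 0 < t + q := by linarith
  have hq1 : q - 1 ≠ 0 := by linarith
  have hm₂ := two_le_of_add_le_mul_sub_one hq ht hm
  set w₁ := (t + 1) / (t + q)
  set w₂ := (q - 1) / (t + q)
  have hw₁ : 0 < w₁ := div_pos (by linarith) htq
  have hw₂ : 0 < w₂ := div_pos (by linarith) htq
  have hw : w₁ + w₂ = 1 := by simp only [w₁, w₂]; field_simp; ring
  have hexp : -w₁ / w₂ = -(t + 1) / (q - 1) := by simp only [w₁, w₂]; field_simp
  have hAw : (f * U ^ (t + q) * P ^ (2 * m)) ^ w₁ = f ^ w₁ * U ^ (t + 1) * P ^ (2 * m * w₁) := by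
    rw [mul_rpow (by positivity) (by positivity), mul_rpow hf.le (by positivity),
      ← rpow_mul hU, ← rpow_natCast, ← rpow_mul hP₀]
    congr 3
    · simp only [w₁]; field_simp
    · push_cast; ring
  have hBw : (f ^ (-(t + 1) / (q - 1)) * G ^ ((t + q) / (q - 1))) ^ w₂ = f ^ (-w₁) * G := by
    have hG1 : (t + q) / (q - 1) * w₂ = 1 := by simp only [w₂]; field_simp
    rw [mul_rpow (by positivity) (by positivity), ← rpow_mul hf.le, ← rpow_mul hG, hG1, rpow_one]
    congr 2
    simp only [w₁, w₂]
    field_simp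
  have hP : P ^ (2 * m - 2) ≤ P ^ (2 * m * w₁) := by
    rw [← rpow_natCast]
    refine rpow_le_rpow_of_exponent_ge' hP₀ hP₁ (by positivity) ?_
    rw [Nat.cast_sub (by omega)]
    push_cast
    have : 2 * m * w₁ * (t + q) = 2 * m * (t + 1) := by simp only [w₁]; field_simp
    nlinarith
  calc U ^ (t + 1) * G * P ^ (2 * m - 2)
      ≤ U ^ (t + 1) * G * P ^ (2 * m * w₁) := by gcongr
    _ = (f * U ^ (t + q) * P ^ (2 * m)) ^ w₁ *
          (f ^ (-(t + 1) / (q - 1)) * G ^ ((t + q) / (q - 1))) ^ w₂ := by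
        rw [hAw, hBw, rpow_neg hf.le]
        field_simp
    _ ≤ _ := by
        rw [← hexp]
        exact rpow_mul_rpow_le_mul_add (by positivity) (by positivity) hw₁ hw₂ hw hε

lemma ofReal_rpow_mul_mul_pow_le_young {q t ε f U G P : ℝ} {m : ℕ} (hq : 1 < q) (ht : -1 < t)
    (hm : t + q ≤ m * (q - 1)) (hε : 0 < ε) (hf : 0 ≤ f) (hU : 0 ≤ U) (hG : 0 ≤ G)
    (hP₀ : 0 ≤ P) (hP₁ : P ≤ 1) :
    ENNReal.ofReal (U ^ (t + 1) * G * P ^ (2 * m - 2)) ≤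
      ENNReal.ofReal (ε * (f * U ^ (t + q) * P ^ (2 * m))) +
        ENNReal.ofReal (ε ^ (-(t + 1) / (q - 1))) *
          (ENNReal.ofReal f ^ (-(t + 1) / (q - 1)) * ENNReal.ofReal (G ^ ((t + q) / (q - 1)))) := by
  rcases hf.lt_or_eq with hf | rfl
  · rw [ENNReal.ofReal_rpow_of_pos hf, ← ENNReal.ofReal_mul (by positivity),
      ← ENNReal.ofReal_mul (by positivity)]
    exact (ENNReal.ofReal_le_ofReal
      (rpow_mul_mul_pow_le_young hq ht hm hε hf hU hG hP₀ hP₁)).trans ENNReal.ofReal_add_le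
  rcases hG.lt_or_eq with hG | rfl
  -- where `f = 0 < G` the right-hand side is infinite
  · have hexp : -(t + 1) / (q - 1) < 0 := div_neg_of_neg_of_pos (by linarith) (by linarith)
    rw [ENNReal.ofReal_zero, ENNReal.zero_rpow_of_neg hexp, ENNReal.top_mul, ENNReal.mul_top]
    · simp
    · simpa using rpow_pos_of_pos hε _
    · simpa using rpow_pos_of_pos hG _
  · simp

lemma exists_add_le_mul_of_moser_relations {p q t a m : ℝ} (hp : 1 ≤ p) (ht : 0 < t) (hm : 0 < m)
    (hΔ : (p - 1) * a ^ 2 < q * t) :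
    ∃ C > 0, ∀ I F J K : ℝ, 0 ≤ I → 0 ≤ K → t * I + 2 * m * J = F →
      q * F ≤ (p - 1) * (a ^ 2 * I + 2 * a * m * J + m ^ 2 * K) →
      (∀ ε > 0, |J| ≤ ε * I + K / (4 * ε)) → I + F ≤ C * K := by
  set Δ := q * t - (p - 1) * a ^ 2
  set c := 2 * m * |(p - 1) * a - q|
  set d := (p - 1) * m ^ 2
  set ε := Δ / (2 * (c + 1))
  have hΔ0 : 0 < Δ := by linarith
  have hc : 0 ≤ c := by positivity
  have hd : 0 ≤ d := mul_nonneg (by linarith) (sq_nonneg m)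
  have hε : 0 < ε := by positivity
  have hcε : c * ε ≤ Δ / 2 := by
    rw [mul_div_assoc', div_le_div_iff₀ (by positivity) two_pos]
    nlinarith
  set CI := 2 / Δ * (c / (4 * ε) + d)
  refine ⟨(1 + t + 2 * m) * CI + m / 2, by positivity, fun I F J K hI hK hA hB hJ => ?_⟩
  -- substituting `F` from the first relation into the second isolates `Δ * I`
  have hΔI : Δ * I ≤ c * |J| + d * K := by
    have hcross : 2 * m * ((p - 1) * a - q) * J ≤ c * |J| := by
      calc 2 * m * ((p - 1) * a - q) * J ≤ |2 * m * ((p - 1) * a - q) * J| := le_abs_self _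
        _ = c * |J| := by rw [abs_mul, abs_mul, abs_of_pos (by positivity : 0 < 2 * m)]
    rw [← hA] at hB
    nlinarith
  have hIK : I ≤ CI * K := by
    have h := mul_le_mul_of_nonneg_left (hJ ε hε) hc
    have hsplit : c * (ε * I + K / (4 * ε)) = c * ε * I + c / (4 * ε) * K := by ring
    have : Δ / 2 * I ≤ (c / (4 * ε) + d) * K := by
      linarith [mul_le_mul_of_nonneg_right hcε hI]
    calc I = 2 / Δ * (Δ / 2 * I) := by field_simp
      _ ≤ 2 / Δ * ((c / (4 * ε) + d) * K) := by gcongr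
      _ = CI * K := by ring
  have hFI : F ≤ (t + 2 * m) * I + m / 2 * K := by
    have h := (le_abs_self J).trans (hJ 1 one_pos)
    nlinarith
  nlinarith [mul_le_mul_of_nonneg_left hIK (by positivity : 0 ≤ 1 + t + 2 * m)]

lemma ofReal_le_mul_of_le_mul_of_ofReal_le {X F K C c : ℝ} {R : ℝ≥0∞}
    (hFX : F ≤ X) (hC : 0 < C) (hX : X ≤ C * K)
    (hK : ENNReal.ofReal K ≤ ENNReal.ofReal ((2 * C)⁻¹ * F) + ENNReal.ofReal c * R) :
    ENNReal.ofReal X ≤ ENNReal.ofReal (2 * C * c) * R := by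
  set x := ENNReal.ofReal X
  have hhalf : ENNReal.ofReal C * ENNReal.ofReal ((2 * C)⁻¹ * F) ≤ x / 2 := by
    rw [← ENNReal.ofReal_mul hC.le, ← ENNReal.ofReal_ofNat 2, ← ENNReal.ofReal_div_of_pos two_pos]
    exact ENNReal.ofReal_le_ofReal (by field_simp; linarith)
  have hx : x / 2 + x / 2 ≤ x / 2 + ENNReal.ofReal (C * c) * R := by
    calc x / 2 + x / 2 = x := ENNReal.add_halves x
      _ ≤ ENNReal.ofReal C * ENNReal.ofReal K := by
        rw [← ENNReal.ofReal_mul hC.le]; exact ENNReal.ofReal_le_ofReal hX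
      _ ≤ ENNReal.ofReal C * (ENNReal.ofReal ((2 * C)⁻¹ * F) + ENNReal.ofReal c * R) := by gcongr
      _ ≤ x / 2 + ENNReal.ofReal (C * c) * R := by
        rw [mul_add, ← mul_assoc, ← ENNReal.ofReal_mul (q := c) hC.le]
        exact add_le_add_left hhalf _
  calc x = 2 * (x / 2) := (ENNReal.mul_div_cancel two_ne_zero ENNReal.ofNat_ne_top).symm
    _ ≤ 2 * (ENNReal.ofReal (C * c) * R) := by
      gcongr
      exact ENNReal.le_of_add_le_add_left (ENNReal.div_ne_top ENNReal.ofReal_ne_top two_ne_zero) hx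
    _ = ENNReal.ofReal (2 * C * c) * R := by
      rw [mul_assoc 2 C, ENNReal.ofReal_mul zero_le_two, ENNReal.ofReal_ofNat, mul_assoc]

section Gradient

variable {E : Type*} [NormedAddCommGroup E] [InnerProductSpace ℝ E] [CompleteSpace E]
  {f g : E → ℝ} {f' g' x : E}

theorem HasGradientAt.mul (hf : HasGradientAt f f' x) (hg : HasGradientAt g g' x) :
    HasGradientAt (fun y => f y * g y) (f x • g' + g x • f') x := by
  rw [hasGradientAt_iff_hasFDerivAt] at *
  rw [map_add, map_smul, map_smul]
  exact hf.mul hg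

theorem HasDerivAt.comp_hasGradientAt {h : ℝ → ℝ} {h' : ℝ} (hh : HasDerivAt h h' (f x))
    (hf : HasGradientAt f f' x) : HasGradientAt (h ∘ f) (h' • f') x := by
  rw [hasGradientAt_iff_hasFDerivAt] at *
  simpa only [map_smul] using hh.comp_hasFDerivAt x hf

theorem ContDiffOn.continuousOn_gradient {s : Set E} (hf : ContDiffOn ℝ 1 f s) (hs : IsOpen s) :
    ContinuousOn (∇ f) s :=
  (toDual ℝ E).symm.continuous.comp_continuousOn (hf.continuousOn_fderiv_of_isOpen hs le_rfl)

theorem ContDiff.continuous_gradient (hf : ContDiff ℝ 1 f) : Continuous (∇ f) :=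
  (toDual ℝ E).symm.continuous.comp (hf.continuous_fderiv one_ne_zero)

end Gradient

section TestFunction

variable {E : Type*} {Ω : Set E} {u φ : E → ℝ} {s : ℝ} {k : ℕ}

/-- Extending by zero makes `u ^ s * φ ^ k` a global test function although `u` only lives
on `Ω`. -/
noncomputable def indicatorRpowMulPow (Ω : Set E) (u φ : E → ℝ) (s : ℝ) (k : ℕ) : E → ℝ :=
  fun x => Ω.indicator (fun y => u y ^ s) x * φ x ^ k

lemma indicatorRpowMulPow_of_mem {x : E} (hx : x ∈ Ω) :
    indicatorRpowMulPow Ω u φ s k x = u x ^ s * φ x ^ k := by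
  simp [indicatorRpowMulPow, indicator_of_mem hx]

section Topology

variable [TopologicalSpace E]

lemma indicatorRpowMulPow_eventuallyEq (hΩ : IsOpen Ω) {x : E} (hx : x ∈ Ω) :
    indicatorRpowMulPow Ω u φ s k =ᶠ[𝓝 x] fun y => u y ^ s * φ y ^ k := by
  filter_upwards [hΩ.mem_nhds hx] with y hy using indicatorRpowMulPow_of_mem hy

lemma support_indicatorRpowMulPow_subset (hk : k ≠ 0) :
    Function.support (indicatorRpowMulPow Ω u φ s k) ⊆ tsupport φ := fun x hx => by
  by_contra h
  simp [indicatorRpowMulPow, image_eq_zero_of_notMem_tsupport h, hk] at hx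

lemma tsupport_indicatorRpowMulPow_subset (hk : k ≠ 0) :
    tsupport (indicatorRpowMulPow Ω u φ s k) ⊆ tsupport φ :=
  closure_minimal (support_indicatorRpowMulPow_subset hk) (isClosed_tsupport φ)

lemma HasCompactSupport.indicatorRpowMulPow (hφc : HasCompactSupport φ) (hk : k ≠ 0) :
    HasCompactSupport (indicatorRpowMulPow Ω u φ s k) :=
  hφc.mono' (support_indicatorRpowMulPow_subset hk)

end Topology

section Normed

variable [NormedAddCommGroup E] [NormedSpace ℝ E]

lemma contDiff_indicatorRpowMulPow (hΩ : IsOpen Ω) (hu : ContDiffOn ℝ 1 u Ω)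
    (hu₀ : ∀ x ∈ Ω, 0 < u x) (hφ : ContDiff ℝ 1 φ) (hφΩ : tsupport φ ⊆ Ω) (hk : k ≠ 0) :
    ContDiff ℝ 1 (indicatorRpowMulPow Ω u φ s k) := by
  rw [contDiff_iff_contDiffAt]
  intro x
  by_cases hx : x ∈ Ω
  · have hus : ContDiffAt ℝ 1 (fun y => u y ^ s) x :=
      (hu.contDiffAt (hΩ.mem_nhds hx)).rpow_const_of_ne (hu₀ x hx).ne'
    exact (hus.mul (hφ.pow k).contDiffAt).congr_of_eventuallyEq
      (indicatorRpowMulPow_eventuallyEq hΩ hx)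
  · refine (contDiffAt_const (c := (0 : ℝ))).congr_of_eventuallyEq ?_
    have : x ∈ (tsupport (indicatorRpowMulPow Ω u φ s k))ᶜ :=
      fun h => hx (hφΩ (tsupport_indicatorRpowMulPow_subset hk h))
    filter_upwards [(isClosed_tsupport _).isOpen_compl.mem_nhds this] with y hy
    exact image_eq_zero_of_notMem_tsupport hy

end Normed

section Inner

variable [NormedAddCommGroup E] [InnerProductSpace ℝ E] [CompleteSpace E]

lemma gradient_indicatorRpowMulPow (hΩ : IsOpen Ω) (hu : ContDiffOn ℝ 1 u Ω)
    (hu₀ : ∀ x ∈ Ω, 0 < u x) (hφ : ContDiff ℝ 1 φ) {x : E} (hx : x ∈ Ω) :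
    ∇ (indicatorRpowMulPow Ω u φ s k) x =
      (s * u x ^ (s - 1) * φ x ^ k) • ∇ u x + (k * φ x ^ (k - 1) * u x ^ s) • ∇ φ x := by
  have hu' : HasGradientAt u (∇ u x) x :=
    ((hu.contDiffAt (hΩ.mem_nhds hx)).differentiableAt one_ne_zero).hasGradientAt
  have hφ' : HasGradientAt φ (∇ φ x) x := (hφ.differentiable one_ne_zero x).hasGradientAt
  have hus := (hasDerivAt_rpow_const (p := s) (Or.inl (hu₀ x hx).ne')).comp_hasGradientAt hu'
  have hφk := (hasDerivAt_pow k (φ x)).comp_hasGradientAt hφ'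
  rw [((hus.mul hφk).congr_of_eventuallyEq (indicatorRpowMulPow_eventuallyEq hΩ hx)).gradient,
    smul_smul, smul_smul, add_comm]
  simp only [Function.comp_apply]
  congr 2 <;> ring

end Inner

end TestFunction

section Integrability

variable {X : Type*} [TopologicalSpace X] [T2Space X] [MeasurableSpace X] [OpensMeasurableSpace X]
  {μ : Measure X} [IsFiniteMeasureOnCompacts μ]

lemma integrableOn_mul_pow_of_tsupport_subset {Ω : Set X} {g φ : X → ℝ} {k : ℕ}
    (hΩ : MeasurableSet Ω) (hg : ContinuousOn g Ω) (hφ : Continuous φ) (hφc : HasCompactSupport φ)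
    (hφΩ : tsupport φ ⊆ Ω) (hk : k ≠ 0) : IntegrableOn (fun x => g x * φ x ^ k) Ω μ :=
  (((hg.mul (hφ.pow k).continuousOn).mono hφΩ).integrableOn_compact hφc).of_forall_sdiff_eq_zero hΩ
    fun x hx => by simp [image_eq_zero_of_notMem_tsupport hx.2, hk]

end Integrability

section WeakSolution

variable {E : Type*} [NormedAddCommGroup E] [InnerProductSpace ℝ E] [CompleteSpace E]
  [MeasureSpace E]

/-- `u` is a weak solution of `-Δ_p u = f u ^ q` on `Ω`. -/
def IsPLaplaceWeakSolution (p q : ℝ) (Ω : Set E) (f u : E → ℝ) : Prop :=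
  ∀ ψ : E → ℝ, ContDiff ℝ 1 ψ → HasCompactSupport ψ → tsupport ψ ⊆ Ω →
    ∫ x in Ω, ‖∇ u x‖ ^ (p - 2) * ⟪∇ u x, ∇ ψ x⟫_ℝ = ∫ x in Ω, f x * u x ^ q * ψ x

def IsPLaplaceStable (p q : ℝ) (Ω : Set E) (f u : E → ℝ) : Prop :=
  ∀ ψ : E → ℝ, ContDiff ℝ 1 ψ → HasCompactSupport ψ → tsupport ψ ⊆ Ω →
    q * ∫ x in Ω, f x * u x ^ (q - 1) * ψ x ^ 2 ≤
      (p - 1) * ∫ x in Ω, ‖∇ u x‖ ^ (p - 2) * ‖∇ ψ x‖ ^ 2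

end WeakSolution

namespace Moser

section Source

variable {X : Type*} {q t : ℝ} {m : ℕ} {Ω : Set X} {f u φ : X → ℝ} {x : X}

variable (q t m f u φ) in
noncomputable def sourceDensity (x : X) : ℝ := f x * u x ^ (t + q) * φ x ^ (2 * m)

lemma sourceDensity_nonneg (hf : 0 ≤ f x) (hu : 0 < u x) (hφ : 0 ≤ φ x) :
    0 ≤ sourceDensity q t m f u φ x := by
  unfold sourceDensity; positivity

variable [TopologicalSpace X] [T2Space X] [MeasurableSpace X] [OpensMeasurableSpace X]
  {μ : Measure X} [IsFiniteMeasureOnCompacts μ]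

lemma integrableOn_sourceDensity (hΩ : IsOpen Ω) (hf : ContinuousOn f Ω) (hu : ContinuousOn u Ω)
    (hu₀ : ∀ x ∈ Ω, 0 < u x) (hφ : Continuous φ) (hφc : HasCompactSupport φ)
    (hφΩ : tsupport φ ⊆ Ω) (hm : m ≠ 0) : IntegrableOn (sourceDensity q t m f u φ) Ω μ :=
  integrableOn_mul_pow_of_tsupport_subset hΩ.measurableSet
    (hf.mul (hu.rpow_const fun x hx => Or.inl (hu₀ x hx).ne')) hφ hφc hφΩ (by omega)

end Source

section GradientDensities

variable {E : Type*} [NormedAddCommGroup E] [InnerProductSpace ℝ E] [CompleteSpace E]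
  {p t : ℝ} {m : ℕ} {Ω : Set E} {u φ : E → ℝ}

section Pointwise

variable (p t m u φ)

noncomputable def gradDensity (x : E) : ℝ := ‖∇ u x‖ ^ p * u x ^ (t - 1) * φ x ^ (2 * m)

noncomputable def crossDensity (x : E) : ℝ :=
  u x ^ t * ‖∇ u x‖ ^ (p - 2) * ⟪∇ u x, ∇ φ x⟫_ℝ * φ x ^ (2 * m - 1)

noncomputable def cutoffDensity (x : E) : ℝ :=
  u x ^ (t + 1) * (‖∇ u x‖ ^ (p - 2) * ‖∇ φ x‖ ^ 2) * φ x ^ (2 * m - 2)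

variable {p t m u φ} {x : E}

lemma gradDensity_nonneg (hu : 0 < u x) (hφ : 0 ≤ φ x) : 0 ≤ gradDensity p t m u φ x := by
  unfold gradDensity; positivity

lemma cutoffDensity_nonneg (hu : 0 < u x) (hφ : 0 ≤ φ x) :
    0 ≤ cutoffDensity p t m u φ x := by
  unfold cutoffDensity; positivity

lemma sq_crossDensity_le (hp : p ≠ 0) (hu : 0 < u x) :
    crossDensity p t m u φ x ^ 2 ≤ gradDensity p t m u φ x * cutoffDensity p t m u φ x := by
  set N := ‖∇ u x‖
  have hN : N ^ (p - 2) * N ^ 2 = N ^ p := rpow_sub_two_mul_sq (norm_nonneg _) hp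
  have hU : u x ^ t * u x ^ t = u x ^ (t - 1) * u x ^ (t + 1) := by
    rw [← rpow_add hu, ← rpow_add hu]; ring_nf
  have hΦ : φ x ^ (2 * m - 1) * φ x ^ (2 * m - 1) = φ x ^ (2 * m) * φ x ^ (2 * m - 2) := by
    rw [← pow_add, ← pow_add]; congr 1; omega
  have hinner : ⟪∇ u x, ∇ φ x⟫_ℝ ^ 2 ≤ N ^ 2 * ‖∇ φ x‖ ^ 2 := by
    rw [← mul_pow]
    exact sq_le_sq.2 ((abs_real_inner_le_norm _ _).trans (le_abs_self _))
  calc crossDensity p t m u φ x ^ 2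
      = (u x ^ t * N ^ (p - 2) * φ x ^ (2 * m - 1)) ^ 2 * ⟪∇ u x, ∇ φ x⟫_ℝ ^ 2 := by
        unfold crossDensity; ring
    _ ≤ (u x ^ t * N ^ (p - 2) * φ x ^ (2 * m - 1)) ^ 2 * (N ^ 2 * ‖∇ φ x‖ ^ 2) := by gcongr
    _ = gradDensity p t m u φ x * cutoffDensity p t m u φ x := by
        unfold gradDensity cutoffDensity
        rw [← hN]
        linear_combination (N ^ (p - 2) * N ^ (p - 2) * N ^ 2 * ‖∇ φ x‖ ^ 2) *
          (φ x ^ (2 * m - 1) * φ x ^ (2 * m - 1) * hU + u x ^ (t - 1) * u x ^ (t + 1) * hΦ)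

lemma rpow_mul_inner_gradient_indicatorRpowMulPow (hΩ : IsOpen Ω) (hu : ContDiffOn ℝ 1 u Ω)
    (hu₀ : ∀ x ∈ Ω, 0 < u x) (hφ : ContDiff ℝ 1 φ) (hp : p ≠ 0) {x : E} (hx : x ∈ Ω) :
    ‖∇ u x‖ ^ (p - 2) * ⟪∇ u x, ∇ (indicatorRpowMulPow Ω u φ t (2 * m)) x⟫_ℝ =
      t * gradDensity p t m u φ x + 2 * m * crossDensity p t m u φ x := by
  rw [gradient_indicatorRpowMulPow hΩ hu hu₀ hφ hx, inner_add_right, real_inner_smul_right,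
    real_inner_smul_right, real_inner_self_eq_norm_sq]
  unfold gradDensity crossDensity
  push_cast
  linear_combination (t * u x ^ (t - 1) * φ x ^ (2 * m)) *
    rpow_sub_two_mul_sq (norm_nonneg (∇ u x)) hp

lemma rpow_mul_norm_gradient_indicatorRpowMulPow_sq (hΩ : IsOpen Ω) (hu : ContDiffOn ℝ 1 u Ω)
    (hu₀ : ∀ x ∈ Ω, 0 < u x) (hφ : ContDiff ℝ 1 φ) (hp : p ≠ 0) {x : E} (hx : x ∈ Ω) :
    ‖∇ u x‖ ^ (p - 2) * ‖∇ (indicatorRpowMulPow Ω u φ ((t + 1) / 2) m) x‖ ^ 2 =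
      ((t + 1) / 2) ^ 2 * gradDensity p t m u φ x +
        2 * ((t + 1) / 2) * m * crossDensity p t m u φ x + m ^ 2 * cutoffDensity p t m u φ x := by
  have hN := rpow_sub_two_mul_sq (norm_nonneg (∇ u x)) hp
  have hU₁ : u x ^ ((t + 1) / 2 - 1) * u x ^ ((t + 1) / 2 - 1) = u x ^ (t - 1) := by
    rw [← rpow_add (hu₀ x hx)]; ring_nf
  have hU₂ : u x ^ ((t + 1) / 2 - 1) * u x ^ ((t + 1) / 2) = u x ^ t := by
    rw [← rpow_add (hu₀ x hx)]; ring_nf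
  have hU₃ : u x ^ ((t + 1) / 2) * u x ^ ((t + 1) / 2) = u x ^ (t + 1) := by
    rw [← rpow_add (hu₀ x hx)]; ring_nf
  have hΦ₁ : φ x ^ m * φ x ^ m = φ x ^ (2 * m) := by rw [← pow_add, two_mul]
  have hΦ₂ : φ x ^ m * φ x ^ (m - 1) = φ x ^ (2 * m - 1) := by rw [← pow_add]; congr 1; omega
  have hΦ₃ : φ x ^ (m - 1) * φ x ^ (m - 1) = φ x ^ (2 * m - 2) := by
    rw [← pow_add]; congr 1; omega
  rw [gradient_indicatorRpowMulPow hΩ hu hu₀ hφ hx, norm_add_sq_real, norm_smul, norm_smul,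
    real_inner_smul_left, real_inner_smul_right]
  unfold gradDensity crossDensity cutoffDensity
  rw [← hN, ← hU₁, ← hU₂, ← hU₃, ← hΦ₁, ← hΦ₂, ← hΦ₃]
  simp only [Real.norm_eq_abs, mul_pow, sq_abs]
  ring

end Pointwise

variable [MeasurableSpace E] [BorelSpace E] {μ : Measure E} [IsFiniteMeasureOnCompacts μ]

lemma integrableOn_gradDensity (hΩ : IsOpen Ω) (hu : ContDiffOn ℝ 1 u Ω) (hu₀ : ∀ x ∈ Ω, 0 < u x)
    (hφ : ContDiff ℝ 1 φ) (hφc : HasCompactSupport φ) (hφΩ : tsupport φ ⊆ Ω) (hp : 0 ≤ p)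
    (hm : m ≠ 0) : IntegrableOn (gradDensity p t m u φ) Ω μ :=
  integrableOn_mul_pow_of_tsupport_subset hΩ.measurableSet
    (((hu.continuousOn_gradient hΩ).norm.rpow_const fun _ _ => Or.inr hp).mul
      (hu.continuousOn.rpow_const fun x hx => Or.inl (hu₀ x hx).ne'))
    hφ.continuous hφc hφΩ (by omega)

lemma integrableOn_crossDensity (hΩ : IsOpen Ω) (hu : ContDiffOn ℝ 1 u Ω) (hu₀ : ∀ x ∈ Ω, 0 < u x)
    (hφ : ContDiff ℝ 1 φ) (hφc : HasCompactSupport φ) (hφΩ : tsupport φ ⊆ Ω) (hp : 2 ≤ p)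
    (hm : m ≠ 0) : IntegrableOn (crossDensity p t m u φ) Ω μ :=
  integrableOn_mul_pow_of_tsupport_subset hΩ.measurableSet
    (((hu.continuousOn.rpow_const fun x hx => Or.inl (hu₀ x hx).ne').mul
      ((hu.continuousOn_gradient hΩ).norm.rpow_const fun _ _ => Or.inr (by linarith))).mul
      ((hu.continuousOn_gradient hΩ).inner hφ.continuous_gradient.continuousOn))
    hφ.continuous hφc hφΩ (by omega)

lemma integrableOn_cutoffDensity (hΩ : IsOpen Ω) (hu : ContDiffOn ℝ 1 u Ω)
    (hu₀ : ∀ x ∈ Ω, 0 < u x) (hφ : ContDiff ℝ 1 φ) (hφc : HasCompactSupport φ)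
    (hφΩ : tsupport φ ⊆ Ω) (hp : 2 ≤ p) (hm : 2 ≤ m) : IntegrableOn (cutoffDensity p t m u φ) Ω μ :=
  integrableOn_mul_pow_of_tsupport_subset hΩ.measurableSet
    ((hu.continuousOn.rpow_const fun x hx => Or.inl (hu₀ x hx).ne').mul
      (((hu.continuousOn_gradient hΩ).norm.rpow_const fun _ _ => Or.inr (by linarith)).mul
        (hφ.continuous_gradient.norm.pow 2).continuousOn))
    hφ.continuous hφc hφΩ (by omega)

end GradientDensities

section Relations

variable {E : Type*} [NormedAddCommGroup E] [InnerProductSpace ℝ E] [CompleteSpace E]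
  [MeasureSpace E] [BorelSpace E] [IsFiniteMeasureOnCompacts (volume : Measure E)]
  {p q t : ℝ} {m : ℕ} {Ω : Set E} {f u φ : E → ℝ}

lemma _root_.IsPLaplaceWeakSolution.moser_identity (hsol : IsPLaplaceWeakSolution p q Ω f u)
    (hΩ : IsOpen Ω) (hu : ContDiffOn ℝ 1 u Ω) (hu₀ : ∀ x ∈ Ω, 0 < u x) (hφ : ContDiff ℝ 1 φ)
    (hφc : HasCompactSupport φ) (hφΩ : tsupport φ ⊆ Ω) (hp : 2 ≤ p) (hm : m ≠ 0) :
    t * (∫ x in Ω, gradDensity p t m u φ x) + 2 * m * ∫ x in Ω, crossDensity p t m u φ x =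
      ∫ x in Ω, sourceDensity q t m f u φ x := by
  have hk : 2 * m ≠ 0 := by omega
  set w := indicatorRpowMulPow Ω u φ t (2 * m)
  have hrhs : ∀ x ∈ Ω, f x * u x ^ q * w x = sourceDensity q t m f u φ x := fun x hx => by
    have hw : w x = u x ^ t * φ x ^ (2 * m) := indicatorRpowMulPow_of_mem hx
    rw [hw, sourceDensity, add_comm t, rpow_add (hu₀ x hx)]
    ring
  calc t * (∫ x in Ω, gradDensity p t m u φ x) + 2 * m * ∫ x in Ω, crossDensity p t m u φ x
      = ∫ x in Ω, (t * gradDensity p t m u φ x + 2 * m * crossDensity p t m u φ x) := by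
        rw [integral_add, integral_const_mul, integral_const_mul]
        · exact (integrableOn_gradDensity hΩ hu hu₀ hφ hφc hφΩ (by linarith) hm).const_mul _
        · exact (integrableOn_crossDensity hΩ hu hu₀ hφ hφc hφΩ hp hm).const_mul _
    _ = ∫ x in Ω, ‖∇ u x‖ ^ (p - 2) * ⟪∇ u x, ∇ w x⟫_ℝ :=
        setIntegral_congr_fun hΩ.measurableSet fun x hx =>
          (rpow_mul_inner_gradient_indicatorRpowMulPow hΩ hu hu₀ hφ (by linarith) hx).symm
    _ = ∫ x in Ω, f x * u x ^ q * w x :=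
        hsol w (contDiff_indicatorRpowMulPow hΩ hu hu₀ hφ hφΩ hk) (hφc.indicatorRpowMulPow hk)
          ((tsupport_indicatorRpowMulPow_subset hk).trans hφΩ)
    _ = ∫ x in Ω, sourceDensity q t m f u φ x := setIntegral_congr_fun hΩ.measurableSet hrhs

lemma _root_.IsPLaplaceStable.moser_inequality (hstab : IsPLaplaceStable p q Ω f u)
    (hΩ : IsOpen Ω) (hu : ContDiffOn ℝ 1 u Ω) (hu₀ : ∀ x ∈ Ω, 0 < u x) (hφ : ContDiff ℝ 1 φ)
    (hφc : HasCompactSupport φ) (hφΩ : tsupport φ ⊆ Ω) (hp : 2 ≤ p) (hm : 2 ≤ m) :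
    q * ∫ x in Ω, sourceDensity q t m f u φ x ≤
      (p - 1) * (((t + 1) / 2) ^ 2 * (∫ x in Ω, gradDensity p t m u φ x) +
        2 * ((t + 1) / 2) * m * (∫ x in Ω, crossDensity p t m u φ x) +
        m ^ 2 * ∫ x in Ω, cutoffDensity p t m u φ x) := by
  have hk : m ≠ 0 := by omega
  set w := indicatorRpowMulPow Ω u φ ((t + 1) / 2) m
  have hlhs : ∀ x ∈ Ω, sourceDensity q t m f u φ x = f x * u x ^ (q - 1) * w x ^ 2 :=
    fun x hx => by
    have hu : u x ^ (t + q) = u x ^ (q - 1) * (u x ^ ((t + 1) / 2) * u x ^ ((t + 1) / 2)) := by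
      rw [← rpow_add (hu₀ x hx), ← rpow_add (hu₀ x hx)]; ring_nf
    have hφ : φ x ^ (2 * m) = φ x ^ m * φ x ^ m := by rw [← pow_add, two_mul]
    have hw : w x = u x ^ ((t + 1) / 2) * φ x ^ m := indicatorRpowMulPow_of_mem hx
    rw [hw, sourceDensity, hu, hφ]
    ring
  have hgrad : IntegrableOn (gradDensity p t m u φ) Ω :=
    integrableOn_gradDensity hΩ hu hu₀ hφ hφc hφΩ (by linarith) hk
  have hcross : IntegrableOn (crossDensity p t m u φ) Ω :=
    integrableOn_crossDensity hΩ hu hu₀ hφ hφc hφΩ hp hk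
  have hcutoff : IntegrableOn (cutoffDensity p t m u φ) Ω :=
    integrableOn_cutoffDensity hΩ hu hu₀ hφ hφc hφΩ hp hm
  calc q * ∫ x in Ω, sourceDensity q t m f u φ x
      = q * ∫ x in Ω, f x * u x ^ (q - 1) * w x ^ 2 := by
        rw [setIntegral_congr_fun hΩ.measurableSet hlhs]
    _ ≤ (p - 1) * ∫ x in Ω, ‖∇ u x‖ ^ (p - 2) * ‖∇ w x‖ ^ 2 :=
        hstab w (contDiff_indicatorRpowMulPow hΩ hu hu₀ hφ hφΩ hk) (hφc.indicatorRpowMulPow hk)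
          ((tsupport_indicatorRpowMulPow_subset hk).trans hφΩ)
    _ = _ := by
        rw [setIntegral_congr_fun hΩ.measurableSet fun x hx =>
          rpow_mul_norm_gradient_indicatorRpowMulPow_sq hΩ hu hu₀ hφ (by linarith) hx,
          integral_add, integral_add, integral_const_mul, integral_const_mul, integral_const_mul]
        · exact hgrad.const_mul _
        · exact hcross.const_mul _
        · exact (hgrad.const_mul _).add (hcross.const_mul _)
        · exact hcutoff.const_mul _

lemma abs_integral_crossDensity_le (hΩ : IsOpen Ω) (hu : ContDiffOn ℝ 1 u Ω)
    (hu₀ : ∀ x ∈ Ω, 0 < u x) (hφ : ContDiff ℝ 1 φ) (hφc : HasCompactSupport φ)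
    (hφΩ : tsupport φ ⊆ Ω) (hφ₀ : ∀ x, 0 ≤ φ x) (hp : 2 ≤ p) (hm : 2 ≤ m) {ε : ℝ} (hε : 0 < ε) :
    |∫ x in Ω, crossDensity p t m u φ x| ≤
      ε * (∫ x in Ω, gradDensity p t m u φ x) +
        (∫ x in Ω, cutoffDensity p t m u φ x) / (4 * ε) := by
  have hgrad : IntegrableOn (gradDensity p t m u φ) Ω :=
    integrableOn_gradDensity hΩ hu hu₀ hφ hφc hφΩ (by linarith) (by omega)
  have hcutoff : IntegrableOn (cutoffDensity p t m u φ) Ω :=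
    integrableOn_cutoffDensity hΩ hu hu₀ hφ hφc hφΩ hp hm
  calc |∫ x in Ω, crossDensity p t m u φ x|
      ≤ ∫ x in Ω, |crossDensity p t m u φ x| := abs_integral_le_integral_abs
    _ ≤ ∫ x in Ω, (ε * gradDensity p t m u φ x + cutoffDensity p t m u φ x / (4 * ε)) :=
        setIntegral_mono_on (integrableOn_crossDensity hΩ hu hu₀ hφ hφc hφΩ hp (by omega)).abs
          ((hgrad.const_mul ε).add (hcutoff.div_const _)) hΩ.measurableSet fun x hx =>
          abs_le_mul_add_div_of_sq_le_mul (gradDensity_nonneg (hu₀ x hx) (hφ₀ x))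
            (cutoffDensity_nonneg (hu₀ x hx) (hφ₀ x)) hε
            (sq_crossDensity_le (by linarith) (hu₀ x hx))
    _ = _ := by rw [integral_add (hgrad.const_mul ε) (hcutoff.div_const _), integral_const_mul,
          integral_div]

lemma ofReal_integral_cutoffDensity_le (hΩ : IsOpen Ω) (hf : ContinuousOn f Ω)
    (hf₀ : ∀ x ∈ Ω, 0 ≤ f x) (hu : ContDiffOn ℝ 1 u Ω) (hu₀ : ∀ x ∈ Ω, 0 < u x)
    (hφ : ContDiff ℝ 1 φ) (hφc : HasCompactSupport φ) (hφΩ : tsupport φ ⊆ Ω) (hφ₀ : ∀ x, 0 ≤ φ x)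
    (hφ₁ : ∀ x, φ x ≤ 1) (hp : 2 ≤ p) (hq : 1 < q) (ht : -1 < t) (hm : t + q ≤ m * (q - 1))
    {ε : ℝ} (hε : 0 < ε) :
    ENNReal.ofReal (∫ x in Ω, cutoffDensity p t m u φ x) ≤
      ENNReal.ofReal (ε * ∫ x in Ω, sourceDensity q t m f u φ x) +
        ENNReal.ofReal (ε ^ (-(t + 1) / (q - 1))) *
          ∫⁻ x in Ω, ENNReal.ofReal (f x) ^ (-(t + 1) / (q - 1)) *
            ENNReal.ofReal ((‖∇ u x‖ ^ (p - 2) * ‖∇ φ x‖ ^ 2) ^ ((t + q) / (q - 1))) := by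
  have hm₂ := two_le_of_add_le_mul_sub_one hq ht hm
  have hsource : IntegrableOn (fun x => ε * sourceDensity q t m f u φ x) Ω :=
    (integrableOn_sourceDensity hΩ hf hu.continuousOn hu₀ hφ.continuous hφc hφΩ
      (by omega)).const_mul ε
  have hcutoff : IntegrableOn (cutoffDensity p t m u φ) Ω :=
    integrableOn_cutoffDensity hΩ hu hu₀ hφ hφc hφΩ hp hm₂
  rw [← integral_const_mul,
    ofReal_integral_eq_lintegral_ofReal hsource (by
      filter_upwards [ae_restrict_mem hΩ.measurableSet] with x hx
      exact mul_nonneg hε.le (sourceDensity_nonneg (hf₀ x hx) (hu₀ x hx) (hφ₀ x))),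
    ofReal_integral_eq_lintegral_ofReal hcutoff (by
      filter_upwards [ae_restrict_mem hΩ.measurableSet] with x hx
      exact cutoffDensity_nonneg (hu₀ x hx) (hφ₀ x)),
    ← lintegral_const_mul' _ _ ENNReal.ofReal_ne_top,
    ← lintegral_add_left' hsource.aemeasurable.ennreal_ofReal]
  exact setLIntegral_mono' hΩ.measurableSet fun x hx =>
    ofReal_rpow_mul_mul_pow_le_young hq ht hm hε (hf₀ x hx) (hu₀ x hx).le (by positivity) (hφ₀ x)
      (hφ₁ x)

lemma setLIntegral_ofReal_eq_integral_add (hΩ : IsOpen Ω) (hf : ContinuousOn f Ω)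
    (hf₀ : ∀ x ∈ Ω, 0 ≤ f x) (hu : ContDiffOn ℝ 1 u Ω) (hu₀ : ∀ x ∈ Ω, 0 < u x)
    (hφ : ContDiff ℝ 1 φ) (hφc : HasCompactSupport φ) (hφΩ : tsupport φ ⊆ Ω) (hφ₀ : ∀ x, 0 ≤ φ x)
    (hp : 0 ≤ p) (hm : m ≠ 0) :
    ∫⁻ x in Ω, ENNReal.ofReal
        ((‖∇ u x‖ ^ p * u x ^ (t - 1) + f x * u x ^ (t + q)) * φ x ^ (2 * (m : ℝ))) =
      ENNReal.ofReal
        ((∫ x in Ω, gradDensity p t m u φ x) + ∫ x in Ω, sourceDensity q t m f u φ x) := by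
  have hgrad : IntegrableOn (gradDensity p t m u φ) Ω :=
    integrableOn_gradDensity hΩ hu hu₀ hφ hφc hφΩ hp hm
  have hsource : IntegrableOn (sourceDensity q t m f u φ) Ω :=
    integrableOn_sourceDensity hΩ hf hu.continuousOn hu₀ hφ.continuous hφc hφΩ hm
  rw [← integral_add hgrad hsource, ofReal_integral_eq_lintegral_ofReal
    (f := fun x => gradDensity p t m u φ x + sourceDensity q t m f u φ x) (hgrad.add hsource) (by
    filter_upwards [ae_restrict_mem hΩ.measurableSet] with x hx
    exact add_nonneg (gradDensity_nonneg (hu₀ x hx) (hφ₀ x))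
      (sourceDensity_nonneg (hf₀ x hx) (hu₀ x hx) (hφ₀ x)))]
  refine setLIntegral_congr_fun hΩ.measurableSet fun x _ => ?_
  rw [show (2 * (m : ℝ)) = ((2 * m : ℕ) : ℝ) by push_cast; ring, rpow_natCast]
  simp only [gradDensity, sourceDensity]
  ring_nf

end Relations

end Moser

/-- **Statement 11.** Moser-iteration estimate (power nonlinearity, exponent `2m` on the
test function) for positive stable weak solutions of `-Δ_p u = f(x) u^q`, `q > p-1`:
`∫_Ω (|∇u|^p u^{t-1} + f u^{t+q}) φ^{2m} ≤ C ∫_Ω f^{-(t+1)/(q-1)} (|∇u|^{p-2}|∇φ|²)^{(t+q)/(q-1)}`,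
with `C` independent of `Ω`, `f` and `u`; both sides are `[0,∞]`-valued integrals. -/
theorem moser_estimate_power_2m
    (p q t : ℝ) (hp : 2 ≤ p) (hq : p - 1 < q)
    (ht1 : 1 ≤ t) (ht2 : t < -1 + 2 * (q + Real.sqrt (q * (q - p + 1))) / (p - 1)) :
    ∃ m₀ : ℕ, 1 ≤ m₀ ∧ ∀ m : ℕ, m₀ ≤ m → ∃ C : ℝ, 0 < C ∧
      ∀ (n : ℕ), 1 ≤ n →
      ∀ Ω : Set (EuclideanSpace ℝ (Fin n)), IsOpen Ω →
      ∀ f : EuclideanSpace ℝ (Fin n) → ℝ, ContinuousOn f Ω → (∀ x ∈ Ω, 0 ≤ f x) →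
      ∀ u : EuclideanSpace ℝ (Fin n) → ℝ, ContDiffOn ℝ 1 u Ω → (∀ x ∈ Ω, 0 < u x) →
      (∀ φ : EuclideanSpace ℝ (Fin n) → ℝ, ContDiff ℝ 1 φ → HasCompactSupport φ →
        tsupport φ ⊆ Ω →
        (∫ x in Ω, ‖gradient u x‖ ^ (p - 2) * (inner ℝ (gradient u x) (gradient φ x) : ℝ)) =
          ∫ x in Ω, f x * u x ^ q * φ x) →
      (∀ φ : EuclideanSpace ℝ (Fin n) → ℝ, ContDiff ℝ 1 φ → HasCompactSupport φ →
        tsupport φ ⊆ Ω →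
        q * (∫ x in Ω, f x * u x ^ (q - 1) * φ x ^ 2) ≤
          (p - 1) * ∫ x in Ω, ‖gradient u x‖ ^ (p - 2) * ‖gradient φ x‖ ^ 2) →
      ∀ φ : EuclideanSpace ℝ (Fin n) → ℝ, ContDiff ℝ 1 φ → HasCompactSupport φ →
        tsupport φ ⊆ Ω → (∀ x, 0 ≤ φ x) → (∀ x, φ x ≤ 1) →
        (∫⁻ x in Ω, ENNReal.ofReal
            ((‖gradient u x‖ ^ p * u x ^ (t - 1) + f x * u x ^ (t + q)) *
              φ x ^ (2 * (m : ℝ)))) ≤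
          ENNReal.ofReal C *
            ∫⁻ x in Ω, ENNReal.ofReal (f x) ^ (-(t + 1) / (q - 1)) *
              ENNReal.ofReal
                ((‖gradient u x‖ ^ (p - 2) * ‖gradient φ x‖ ^ 2) ^ ((t + q) / (q - 1))) := by
  have hq₁ : 1 < q := by linarith
  refine ⟨⌈(t + q) / (q - 1)⌉₊, Nat.one_le_ceil_iff.2 (by apply div_pos <;> linarith),
    fun m hm => ?_⟩
  have hmq : t + q ≤ m * (q - 1) :=
    (div_le_iff₀ (by linarith)).1 ((Nat.le_ceil _).trans (by exact_mod_cast hm))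
  have hm₂ := two_le_of_add_le_mul_sub_one hq₁ (by linarith) hmq
  obtain ⟨C, hC, hIF⟩ := exists_add_le_mul_of_moser_relations (m := m) (by linarith)
    (by linarith) (by positivity) (sub_one_mul_add_one_div_two_sq_lt_mul (by linarith) hq ht1 ht2)
  refine ⟨2 * C * (2 * C)⁻¹ ^ (-(t + 1) / (q - 1)), by positivity, ?_⟩
  intro n _ Ω hΩ f hf hf₀ u hu hu₀ hsol hstab φ hφ hφc hφΩ hφ₀ hφ₁
  have hI₀ : 0 ≤ ∫ x in Ω, Moser.gradDensity p t m u φ x := setIntegral_nonneg hΩ.measurableSet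
    fun x hx => Moser.gradDensity_nonneg (hu₀ x hx) (hφ₀ x)
  have hK₀ : 0 ≤ ∫ x in Ω, Moser.cutoffDensity p t m u φ x := setIntegral_nonneg hΩ.measurableSet
    fun x hx => Moser.cutoffDensity_nonneg (hu₀ x hx) (hφ₀ x)
  rw [Moser.setLIntegral_ofReal_eq_integral_add hΩ hf hf₀ hu hu₀ hφ hφc hφΩ hφ₀ (by linarith)
    (by omega)]
  exact ofReal_le_mul_of_le_mul_of_ofReal_le (le_add_of_nonneg_left hI₀) hC
    (hIF _ _ _ _ hI₀ hK₀
      (IsPLaplaceWeakSolution.moser_identity hsol hΩ hu hu₀ hφ hφc hφΩ hp (by omega))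
      (IsPLaplaceStable.moser_inequality hstab hΩ hu hu₀ hφ hφc hφΩ hp hm₂)
      fun ε hε => Moser.abs_integral_crossDensity_le hΩ hu hu₀ hφ hφc hφΩ hφ₀ hp hm₂ hε)
    (Moser.ofReal_integral_cutoffDensity_le hΩ hf hf₀ hu hu₀ hφ hφc hφΩ hφ₀ hφ₁ hp hq₁
      (by linarith) hmq (by positivity))
end
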